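/- arXiv:2110.03300 — 10 statements merged into one kernel-verified Lean document; each statement's English description precedes it below -/
import Mathlib

section
/- Let d = q·n with q ≥ 1 and n ≥ 1 integers, let π = (π_1,…,π_d) be a uniformly random permutation of {1,…,d}, and for i ∈ {1,…,n} define the PermK compressor C_i(x) := n · Σ_{j=q(i−1)+1}^{qi} x_{π_j} e_{π_j} for x ∈ ℝ^d, where e_l is the l-th standard basis vector. Then: (i) each C_i is unbiased, i.e. E[C_i(x)] = x for all x ∈ ℝ^d; and (ii) for all a_1,…,a_n ∈ ℝ^d, with ā := (1/n)Σ_{i=1}^n a_i, one has E[‖(1/n)Σ_{i=1}^n C_i(a_i) − ā‖²] ≤ (1/n)Σ_{i=1}^n ‖a_i − ā‖² (i.e. {C_i}_{i=1}^n ∈ 𝕀𝕍(1), equivalently {C_i} satisfies the AB inequality with A = B = 1). -/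
open Finset

/-- Expectation (uniform average) over a finite type, valued in a real vector space. -/
noncomputable def finExp {α V : Type*} [Fintype α] [AddCommGroup V] [Module ℝ V]
    (F : α → V) : V :=
  (Fintype.card α : ℝ)⁻¹ • ∑ a, F a

/-- The PermK compressor (case `d = q·n`), written 0-indexed: worker `i ∈ {0,…,n-1}` keeps
the coordinates `π j` for `q·i ≤ j < q·(i+1)`, scaled by `n`. -/
noncomputable def permK (q n : ℕ) {d : ℕ} (π : Equiv.Perm (Fin d)) (i : Fin n)
    (x : EuclideanSpace ℝ (Fin d)) : EuclideanSpace ℝ (Fin d) :=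
  (n : ℝ) • ∑ j ∈ Finset.univ.filter (fun j : Fin d => q * i.1 ≤ j.1 ∧ j.1 < q * (i.1 + 1)),
    EuclideanSpace.single (π j) (x (π j))


private lemma sum_perm_apply_eq {d : ℕ} {V : Type*} [AddCommMonoid V] (f : Fin d → V) (j j' : Fin d) :
    ∑ π : Equiv.Perm (Fin d), f (π j) = ∑ π : Equiv.Perm (Fin d), f (π j') := by
  have h := Equiv.sum_comp (Equiv.mulRight (Equiv.swap j j'))
    (fun π : Equiv.Perm (Fin d) => f (π j))
  simpa [Equiv.Perm.mul_apply, Equiv.swap_apply_left] using h.symm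

private lemma sum_perm_apply {d : ℕ} {V : Type*} [AddCommGroup V] [Module ℝ V] (hd : 0 < d)
    (f : Fin d → V) (j : Fin d) :
    ∑ π : Equiv.Perm (Fin d), f (π j)
      = ((Fintype.card (Equiv.Perm (Fin d)) : ℝ) / d) • ∑ k, f k := by
  have key : (d : ℝ) • ∑ π : Equiv.Perm (Fin d), f (π j)
      = (Fintype.card (Equiv.Perm (Fin d)) : ℝ) • ∑ k, f k := by
    rw [Nat.cast_smul_eq_nsmul, Nat.cast_smul_eq_nsmul]
    calc d • ∑ π : Equiv.Perm (Fin d), f (π j)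
        = ∑ _j' : Fin d, ∑ π : Equiv.Perm (Fin d), f (π j) := by
          simp [Finset.sum_const, Finset.card_univ]
      _ = ∑ j' : Fin d, ∑ π : Equiv.Perm (Fin d), f (π j') :=
          Finset.sum_congr rfl fun j' _ => sum_perm_apply_eq f j j'
      _ = ∑ π : Equiv.Perm (Fin d), ∑ j' : Fin d, f (π j') := Finset.sum_comm
      _ = ∑ π : Equiv.Perm (Fin d), ∑ k, f k :=
          Finset.sum_congr rfl fun π _ => Equiv.sum_comp π f
      _ = Fintype.card (Equiv.Perm (Fin d)) • ∑ k, f k := by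
          simp [Finset.sum_const, Finset.card_univ]
  have hd' : (d : ℝ) ≠ 0 := Nat.cast_ne_zero.mpr hd.ne'
  have := congrArg (fun v => (d : ℝ)⁻¹ • v) key
  simpa [smul_smul, inv_mul_cancel₀ hd', div_eq_mul_inv, mul_comm] using this

private lemma mem_block_iff {q : ℕ} (hq : 0 < q) {d n : ℕ} (i : Fin n) (j : Fin d) :
    (q * i.1 ≤ j.1 ∧ j.1 < q * (i.1 + 1)) ↔ j.1 / q = i.1 := by
  constructor
  · rintro ⟨h1, h2⟩
    have ha : i.1 ≤ j.1 / q := (Nat.le_div_iff_mul_le hq).2 (by rwa [mul_comm] at h1)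
    have hb : j.1 / q < i.1 + 1 := (Nat.div_lt_iff_lt_mul hq).2 (by rwa [mul_comm] at h2)
    omega
  · intro h
    have h1 : q * (j.1 / q) ≤ j.1 := Nat.mul_div_le j.1 q
    have h2 : j.1 < q * (j.1 / q + 1) := by
      have := Nat.div_add_mod j.1 q
      have := Nat.mod_lt j.1 hq
      rw [Nat.mul_add, Nat.mul_one]
      omega
    rw [← h]
    exact ⟨h1, h2⟩

private lemma card_block {q n d : ℕ} (hq : 0 < q) (hd : d = q * n) (i : Fin n) :
    (Finset.univ.filter (fun j : Fin d => q * i.1 ≤ j.1 ∧ j.1 < q * (i.1 + 1))).card = q := by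
  have hsub : q * (i.1 + 1) ≤ d := by
    rw [hd]; exact Nat.mul_le_mul_left q i.2
  have hkey : (Finset.univ.filter (fun j : Fin d => q * i.1 ≤ j.1 ∧ j.1 < q * (i.1 + 1))).card
      = (Finset.range q).card := by
    apply Finset.card_bij' (fun j _ => j.1 - q * i.1)
      (fun k hk => (⟨q * i.1 + k, by
        simp only [Finset.mem_range] at hk
        have : q * i.1 + k < q * (i.1 + 1) := by rw [Nat.mul_add, Nat.mul_one]; omega
        omega⟩ : Fin d))
    case hi =>
      intro a ha
      simp only [Finset.mem_filter, Finset.mem_univ, true_and] at ha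
      simp only [Finset.mem_range]
      have h2 : a.1 < q * (i.1 + 1) := ha.2
      rw [Nat.mul_add, Nat.mul_one] at h2
      omega
    case hj =>
      intro k hk
      simp only [Finset.mem_range] at hk
      simp only [Finset.mem_filter, Finset.mem_univ, true_and]
      refine ⟨by omega, ?_⟩
      rw [Nat.mul_add, Nat.mul_one]; omega
    case left_inv =>
      intro a ha
      simp only [Finset.mem_filter, Finset.mem_univ, true_and] at ha
      exact Fin.ext (by simp; omega)
    case right_inv =>
      intro k hk
      simp only [Finset.mem_range] at hk
      simp
  rw [hkey, Finset.card_range]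

private lemma euclid_sum_single {d : ℕ} (x : EuclideanSpace ℝ (Fin d)) :
    ∑ k, EuclideanSpace.single k (x k) = x := by
  ext l
  rw [WithLp.ofLp_sum, Finset.sum_apply]
  simp [EuclideanSpace.single_apply]

private lemma euclid_norm_sq {d : ℕ} (x : EuclideanSpace ℝ (Fin d)) :
    ‖x‖ ^ 2 = ∑ l, x l ^ 2 := by
  rw [EuclideanSpace.norm_eq, Real.sq_sqrt (by positivity)]
  simp [sq_abs]

/-- For `d = q·n`, the PermK compressors are unbiased and belong to `𝕀𝕍(1)`,
where the expectation is taken over a uniformly random permutation `π` of `{1,…,d}`. -/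

theorem permK_unbiased_and_inputVariance_one
    {q n d : ℕ} (hq : 1 ≤ q) (hn : 1 ≤ n) (hd : d = q * n) :
    (∀ (i : Fin n) (x : EuclideanSpace ℝ (Fin d)),
      finExp (fun π : Equiv.Perm (Fin d) => permK q n π i x) = x) ∧
    (∀ a : Fin n → EuclideanSpace ℝ (Fin d),
      finExp (fun π : Equiv.Perm (Fin d) =>
          ‖(n : ℝ)⁻¹ • ∑ i, permK q n π i (a i) - (n : ℝ)⁻¹ • ∑ i, a i‖ ^ 2) ≤
        (n : ℝ)⁻¹ * ∑ i, ‖a i - (n : ℝ)⁻¹ • ∑ j, a j‖ ^ 2) := by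
  have hq0 : 0 < q := hq
  have hn0 : 0 < n := hn
  have hd0 : 0 < d := by rw [hd]; positivity
  have hdR : (d : ℝ) ≠ 0 := Nat.cast_ne_zero.mpr hd0.ne'
  have hnR : (n : ℝ) ≠ 0 := Nat.cast_ne_zero.mpr hn0.ne'
  set P := Fintype.card (Equiv.Perm (Fin d)) with hP
  have hPpos : 0 < P := Fintype.card_pos
  have hPR : (P : ℝ) ≠ 0 := Nat.cast_ne_zero.mpr hPpos.ne'
  -- the block map
  have hBlt : ∀ j : Fin d, j.1 / q < n := fun j => by
    rw [Nat.div_lt_iff_lt_mul hq0, mul_comm, ← hd]; exact j.2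
  set B : Fin d → Fin n := fun j => ⟨j.1 / q, hBlt j⟩ with hB
  have hfilter : ∀ i : Fin n,
      (Finset.univ.filter (fun j : Fin d => q * i.1 ≤ j.1 ∧ j.1 < q * (i.1 + 1)))
        = Finset.univ.filter (fun j : Fin d => B j = i) := by
    intro i
    apply Finset.filter_congr
    intro j _
    simp only [hB, Fin.ext_iff]
    exact_mod_cast mem_block_iff hq0 i j
  have hcardB : ∀ i : Fin n, (Finset.univ.filter (fun j : Fin d => B j = i)).card = q := by
    intro i; rw [← hfilter]; exact card_block hq0 hd i
  constructor
  · -- unbiasedness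
    intro i x
    unfold finExp permK
    have h1 : ∑ π : Equiv.Perm (Fin d), (n : ℝ) •
          ∑ j ∈ Finset.univ.filter (fun j : Fin d => q * i.1 ≤ j.1 ∧ j.1 < q * (i.1 + 1)),
            EuclideanSpace.single (π j) (x (π j))
        = (n : ℝ) • ∑ j ∈ Finset.univ.filter
            (fun j : Fin d => q * i.1 ≤ j.1 ∧ j.1 < q * (i.1 + 1)),
            ∑ π : Equiv.Perm (Fin d), EuclideanSpace.single (π j) (x (π j)) := by
      rw [← Finset.smul_sum, Finset.sum_comm]
    rw [h1]
    have h2 : ∀ j : Fin d,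
        ∑ π : Equiv.Perm (Fin d), EuclideanSpace.single (π j) (x (π j))
          = ((P : ℝ) / d) • x := by
      intro j
      rw [sum_perm_apply hd0 (fun k => EuclideanSpace.single k (x k)) j, euclid_sum_single]
    rw [Finset.sum_congr rfl (fun j _ => h2 j), Finset.sum_const, card_block hq0 hd i,
      ← Nat.cast_smul_eq_nsmul ℝ, smul_smul, smul_smul, smul_smul]
    have hscal : (P : ℝ)⁻¹ * (n : ℝ) * (q : ℝ) * ((P : ℝ) / d) = 1 := by
      have hdqn : (d : ℝ) = (q : ℝ) * n := by exact_mod_cast congrArg Nat.cast hd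
      field_simp [hdqn]
      rw [hdqn]; ring
    show ((P : ℝ)⁻¹ * (n : ℝ) * (q : ℝ) * ((P : ℝ) / d)) • x = x
    rw [hscal, one_smul]
  · -- variance
    intro a
    set abar : EuclideanSpace ℝ (Fin d) := (n : ℝ)⁻¹ • ∑ j, a j with habar
    -- coordinate formula
    have hval : ∀ (π : Equiv.Perm (Fin d)) (l : Fin d),
        ((n : ℝ)⁻¹ • ∑ i, permK q n π i (a i)) l = a (B (π.symm l)) l := by
      intro π l
      have hsum : ∑ i, permK q n π i (a i)
          = (n : ℝ) • ∑ j : Fin d, EuclideanSpace.single (π j) (a (B j) (π j)) := by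
        unfold permK
        rw [← Finset.smul_sum]
        congr 1
        rw [← Finset.sum_fiberwise Finset.univ B
          (fun j => EuclideanSpace.single (π j) (a (B j) (π j)))]
        refine Finset.sum_congr rfl fun i _ => ?_
        rw [hfilter i]
        refine Finset.sum_congr rfl fun j hj => ?_
        simp only [Finset.mem_filter] at hj
        rw [hj.2]
      rw [hsum, smul_smul, inv_mul_cancel₀ hnR, one_smul, WithLp.ofLp_sum, Finset.sum_apply]
      have hterm : ∀ j : Fin d,
          (EuclideanSpace.single (π j) (a (B j) (π j)) : EuclideanSpace ℝ (Fin d)) l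
            = if j = π.symm l then a (B (π.symm l)) l else 0 := by
        intro j
        by_cases h : j = π.symm l
        · subst h
          rw [if_pos rfl, EuclideanSpace.single_apply, Equiv.apply_symm_apply, if_pos rfl]
        · rw [if_neg h, EuclideanSpace.single_apply, if_neg]
          intro hc
          exact h (((Equiv.symm_apply_eq π).2 hc).symm)
      rw [Finset.sum_congr rfl fun j _ => hterm j]
      simp
    have hnorm : ∀ π : Equiv.Perm (Fin d),
        ‖(n : ℝ)⁻¹ • ∑ i, permK q n π i (a i) - abar‖ ^ 2
          = ∑ l, (a (B (π.symm l)) l - abar l) ^ 2 := by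
      intro π
      rw [euclid_norm_sq]
      refine Finset.sum_congr rfl fun l _ => ?_
      rw [PiLp.sub_apply, hval π l]
    unfold finExp
    simp only [smul_eq_mul]
    rw [Finset.sum_congr rfl fun π _ => hnorm π, Finset.sum_comm]
    have hinner : ∀ l : Fin d,
        ∑ π : Equiv.Perm (Fin d), (a (B (π.symm l)) l - abar l) ^ 2
          = ((P : ℝ) / d) * ∑ j : Fin d, (a (B j) l - abar l) ^ 2 := by
      intro l
      have hre : ∑ π : Equiv.Perm (Fin d), (a (B (π.symm l)) l - abar l) ^ 2
          = ∑ π : Equiv.Perm (Fin d), (a (B (π l)) l - abar l) ^ 2 := by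
        have := Equiv.sum_comp (Equiv.inv (Equiv.Perm (Fin d)))
          (fun π : Equiv.Perm (Fin d) => (a (B (π l)) l - abar l) ^ 2)
        simpa using this
      rw [hre, sum_perm_apply hd0 (fun j => (a (B j) l - abar l) ^ 2) l, smul_eq_mul]
    rw [Finset.sum_congr rfl fun l _ => hinner l, ← Finset.mul_sum, ← mul_assoc]
    rw [Finset.sum_comm]
    have hnormj : ∑ j : Fin d, ∑ l, (a (B j) l - abar l) ^ 2
        = ∑ j : Fin d, ‖a (B j) - abar‖ ^ 2 := by
      refine Finset.sum_congr rfl fun j _ => ?_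
      rw [euclid_norm_sq]
      refine Finset.sum_congr rfl fun l _ => ?_
      rw [PiLp.sub_apply]
    rw [hnormj]
    have hfiber : ∑ j : Fin d, ‖a (B j) - abar‖ ^ 2
        = ∑ i : Fin n, (q : ℝ) * ‖a i - abar‖ ^ 2 := by
      rw [← Finset.sum_fiberwise Finset.univ B (fun j => ‖a (B j) - abar‖ ^ 2)]
      refine Finset.sum_congr rfl fun i _ => ?_
      have hcongr : ∀ j ∈ Finset.univ.filter (fun j : Fin d => B j = i),
          ‖a (B j) - abar‖ ^ 2 = ‖a i - abar‖ ^ 2 := by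
        intro j hj
        simp only [Finset.mem_filter] at hj
        rw [hj.2]
      rw [Finset.sum_congr rfl hcongr, Finset.sum_const, hcardB i, nsmul_eq_mul]
    rw [hfiber, ← Finset.mul_sum, ← mul_assoc]
    apply le_of_eq
    congr 1
    have hdqn : (d : ℝ) = (q : ℝ) * n := by exact_mod_cast congrArg Nat.cast hd
    field_simp [hdqn]
    rw [hdqn, ← hP]; ring
end

section
/- Let f_1,…,f_n : ℝ^d → ℝ be differentiable with f = (1/n)Σ_{i=1}^n f_i, and suppose L_+ ≥ 0 satisfies (1/n)Σ_{i=1}^n ‖∇f_i(x) − ∇f_i(y)‖² ≤ L_+²‖x−y‖² for all x, y, and L_± ≥ 0 satisfies (1/n)Σ_{i=1}^n ‖∇f_i(x) − ∇f_i(y)‖² − ‖∇f(x) − ∇f(y)‖² ≤ L_±²‖x−y‖² for all x, y. Let {C_i}_{i=1}^n ∈ 𝕌(A,B) with A ≥ B ≥ 0, let p ∈ (0,1], and let θ be a Bernoulli random variable with P(θ = 1) = p, independent of (C_1,…,C_n). Fix x, x', g ∈ ℝ^d and define the random vector g' := ∇f(x') if θ = 1, and g' := g + (1/n)Σ_{i=1}^n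 C_i(∇f_i(x') − ∇f_i(x)) if θ = 0. Then E[‖g' − ∇f(x')‖²] ≤ (1−p)·((A − B)L_+² + B·L_±²)·‖x' − x‖² + (1−p)·‖g − ∇f(x)‖². -/
open MeasureTheory ProbabilityTheory Finset

/-- MARINA one-step variance bound; Lemma in the proof of Theorem 4.
For `{Cᵢ}ᵢ ∈ 𝕌(A,B)` and a Bernoulli(`p`) variable `θ` independent of `(C₁,…,Cₙ)`, the
MARINA estimator `g' = ∇f(x')` if `θ = 1` and `g' = g + (1/n)∑ᵢ Cᵢ(∇fᵢ(x') − ∇fᵢ(x))`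
otherwise, satisfies
`E‖g' − ∇f(x')‖² ≤ (1−p)((A−B)L₊² + B·L±²)‖x'−x‖² + (1−p)‖g − ∇f(x)‖²`. -/
theorem marina_variance_recursion_step
    {d n : ℕ} (hn : 0 < n)
    {Ω : Type*} [MeasureSpace Ω] [IsProbabilityMeasure (ℙ : Measure Ω)]
    (f : Fin n → EuclideanSpace ℝ (Fin d) → ℝ)
    (hdiff : ∀ i, Differentiable ℝ (f i))
    (F : EuclideanSpace ℝ (Fin d) → ℝ)
    (hF : F = fun z => (n : ℝ)⁻¹ * ∑ i, f i z)
    (Lplus Lpm : ℝ) (hLplus0 : 0 ≤ Lplus) (hLpm0 : 0 ≤ Lpm)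
    (hLplus : ∀ z y,
      (n : ℝ)⁻¹ * ∑ i, ‖gradient (f i) z - gradient (f i) y‖ ^ 2 ≤ Lplus ^ 2 * ‖z - y‖ ^ 2)
    (hLpm : ∀ z y,
      (n : ℝ)⁻¹ * ∑ i, ‖gradient (f i) z - gradient (f i) y‖ ^ 2
          - ‖gradient F z - gradient F y‖ ^ 2 ≤ Lpm ^ 2 * ‖z - y‖ ^ 2)
    (C : Fin n → Ω → EuclideanSpace ℝ (Fin d) → EuclideanSpace ℝ (Fin d))
    (hCL2 : ∀ i (a : EuclideanSpace ℝ (Fin d)), MemLp (fun w => C i w a) 2 ℙ)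
    (A B : ℝ) (hAB0 : A ≥ B) (hB0 : 0 ≤ B)
    (hCunb : ∀ i (a : EuclideanSpace ℝ (Fin d)), (∫ w, C i w a ∂ℙ) = a)
    (hABineq : ∀ a : Fin n → EuclideanSpace ℝ (Fin d),
      (∫ w, ‖(n : ℝ)⁻¹ • ∑ i, C i w (a i) - (n : ℝ)⁻¹ • ∑ i, a i‖ ^ 2 ∂ℙ) ≤
        A * ((n : ℝ)⁻¹ * ∑ i, ‖a i‖ ^ 2) - B * ‖(n : ℝ)⁻¹ • ∑ i, a i‖ ^ 2)
    (p : ℝ) (hp0 : 0 < p) (hp1 : p ≤ 1)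
    (θ : Ω → Bool) (hθmeas : Measurable θ)
    (hθp : ℙ {w | θ w = true} = ENNReal.ofReal p)
    (hθindep : IndepFun θ (fun w => fun i => C i w) ℙ)
    (x x' g : EuclideanSpace ℝ (Fin d))
    (g' : Ω → EuclideanSpace ℝ (Fin d))
    (hg' : ∀ w, g' w =
      if θ w = true then gradient F x'
      else g + (n : ℝ)⁻¹ • ∑ i, C i w (gradient (f i) x' - gradient (f i) x)) :
    (∫ w, ‖g' w - gradient F x'‖ ^ 2 ∂ℙ) ≤
      (1 - p) * ((A - B) * Lplus ^ 2 + B * Lpm ^ 2) * ‖x' - x‖ ^ 2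
        + (1 - p) * ‖g - gradient F x‖ ^ 2 := by
  classical
  -- gradient of F is the average of the gradients
  have hgrad : ∀ z, gradient F z = (n : ℝ)⁻¹ • ∑ i, gradient (f i) z := by
    intro z
    have h1 : HasFDerivAt (fun y => (n : ℝ)⁻¹ * ∑ i, f i y)
        ((n : ℝ)⁻¹ • ∑ i, (InnerProductSpace.toDual ℝ (EuclideanSpace ℝ (Fin d)))
          (gradient (f i) z)) z :=
      (HasFDerivAt.fun_sum (fun i _ => ((hdiff i z).hasGradientAt.hasFDerivAt))).const_mul _
    have h2 : HasGradientAt F ((n : ℝ)⁻¹ • ∑ i, gradient (f i) z) z := by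
      rw [hasGradientAt_iff_hasFDerivAt, hF]
      simpa [_root_.map_smul, map_sum] using h1
    exact h2.gradient
  set a : Fin n → EuclideanSpace ℝ (Fin d) :=
    fun i => gradient (f i) x' - gradient (f i) x with ha
  set m : EuclideanSpace ℝ (Fin d) := (n : ℝ)⁻¹ • ∑ i, a i with hmdef
  set c : EuclideanSpace ℝ (Fin d) := g - gradient F x with hcdef
  set S : Ω → EuclideanSpace ℝ (Fin d) :=
    fun w => (n : ℝ)⁻¹ • ∑ i, C i w (a i) with hSdef
  have hm : gradient F x' = gradient F x + m := by
    rw [hgrad x', hgrad x, hmdef, ha]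
    rw [Finset.sum_sub_distrib, smul_sub]
    abel
  -- integrability facts
  have hCa_int : ∀ i, Integrable (fun w => C i w (a i)) ℙ :=
    fun i => (hCL2 i (a i)).integrable one_le_two
  have hsum2 : MemLp (fun w => ∑ i, C i w (a i)) 2 ℙ :=
    memLp_finset_sum Finset.univ (fun i _ => hCL2 i (a i))
  have hS2 : MemLp S 2 ℙ := hsum2.const_smul ((n : ℝ)⁻¹)
  have hY2 : MemLp (fun w => S w - m) 2 ℙ := by
    have := hS2.sub (memLp_const (μ := ℙ) m)
    simpa [Pi.sub_def] using this
  have hY_int : Integrable (fun w => S w - m) ℙ := hY2.integrable one_le_two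
  have hS_int : Integrable S ℙ := hS2.integrable one_le_two
  have hnormsq_int : Integrable (fun w => ‖S w - m‖ ^ 2) ℙ := by
    simpa using hY2.norm.integrable_sq
  have hZ2 : MemLp (fun w => c + (S w - m)) 2 ℙ := by
    have := (memLp_const (μ := ℙ) c).add hY2
    simpa [Pi.add_def] using this
  have hh_int : Integrable (fun w => ‖c + (S w - m)‖ ^ 2) ℙ := by
    simpa using hZ2.norm.integrable_sq
  -- mean of S is m
  have hES : (∫ w, S w ∂ℙ) = m := by
    rw [hSdef]
    simp only
    rw [integral_smul, integral_finset_sum Finset.univ (fun i _ => hCa_int i)]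
    simp only [hCunb, hmdef]
  have hEY : (∫ w, (S w - m) ∂ℙ) = 0 := by
    rw [integral_sub hS_int (integrable_const m), hES, integral_const]
    simp
  have hinner_int : Integrable (fun w => (inner ℝ c (S w - m) : ℝ)) ℙ :=
    hY_int.const_inner c
  have hinner : (∫ w, (inner ℝ c (S w - m) : ℝ) ∂ℙ) = 0 := by
    rw [integral_inner hY_int c, hEY, inner_zero_right]
  -- expansion of the second moment
  have hEh : (∫ w, ‖c + (S w - m)‖ ^ 2 ∂ℙ)
      = ‖c‖ ^ 2 + ∫ w, ‖S w - m‖ ^ 2 ∂ℙ := by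
    have expand : ∀ w : Ω, ‖c + (S w - m)‖ ^ 2
        = ‖c‖ ^ 2 + 2 * (inner ℝ c (S w - m) : ℝ) + ‖S w - m‖ ^ 2 :=
      fun w => norm_add_sq_real _ _
    rw [show (fun w => ‖c + (S w - m)‖ ^ 2)
        = fun w => ‖c‖ ^ 2 + 2 * (inner ℝ c (S w - m) : ℝ) + ‖S w - m‖ ^ 2 from
      funext expand]
    have hint1 : Integrable (fun w => ‖c‖ ^ 2 + 2 * (inner ℝ c (S w - m) : ℝ)) ℙ :=
      (integrable_const _).add (hinner_int.const_mul 2)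
    rw [integral_add hint1 hnormsq_int,
      integral_add (integrable_const (‖c‖ ^ 2)) (hinner_int.const_mul 2),
      integral_const, integral_const_mul, hinner]
    simp
  -- the indicator of θ = false and the quadratic functional of C
  set t : Ω → ℝ := fun w => if θ w = true then 0 else 1 with htdef
  set h : Ω → ℝ := fun w => ‖c + (S w - m)‖ ^ 2 with hhdef
  have hpoint : (fun w => ‖g' w - gradient F x'‖ ^ 2) = fun w => t w * h w := by
    funext w
    rw [hg' w]
    by_cases hw : θ w = true
    · simp [htdef, hw]
    · have hrw : g + (n : ℝ)⁻¹ • ∑ i, C i w (a i) - gradient F x'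
          = c + (S w - m) := by
        rw [hm, hcdef, hSdef]
        abel
      simp only [htdef, hhdef, if_neg hw, hrw, one_mul]
      exact congrArg (fun v => ‖v‖ ^ 2) hrw
  -- independence of t and h
  have hφ : Measurable (fun b : Bool => if b = true then (0 : ℝ) else 1) :=
    measurable_from_top
  have hψ : Measurable (fun v : Fin n → (EuclideanSpace ℝ (Fin d) → EuclideanSpace ℝ (Fin d)) =>
      ‖c + ((n : ℝ)⁻¹ • ∑ i, v i (a i) - m)‖ ^ 2) := by
    have h1 : Measurable (fun v : Fin n → (EuclideanSpace ℝ (Fin d) → EuclideanSpace ℝ (Fin d)) =>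
        ∑ i, v i (a i)) :=
      Finset.measurable_sum _ (fun i _ => (measurable_pi_apply (a i)).comp (measurable_pi_apply i))
    exact ((measurable_const.add ((h1.const_smul ((n : ℝ)⁻¹)).sub measurable_const)).norm.pow
      measurable_const)
  have hindep : IndepFun t h ℙ := hθindep.comp hφ hψ
  have ht_set : MeasurableSet {w | θ w = false} := hθmeas (measurableSet_singleton false)
  have ht_eq : t = Set.indicator {w | θ w = false} (fun _ => (1 : ℝ)) := by
    funext w
    by_cases hw : θ w = true <;> simp [htdef, Set.indicator, hw]
  have ht_int : Integrable t ℙ := by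
    rw [ht_eq]; exact (integrable_const (1 : ℝ)).indicator ht_set
  have htprob : ℙ {w | θ w = false} = 1 - ENNReal.ofReal p := by
    have hcomp : {w | θ w = false} = {w | θ w = true}ᶜ := by
      ext w; simp [Bool.not_eq_true]
    rw [hcomp, measure_compl (show MeasurableSet {w | θ w = true} from
      hθmeas (measurableSet_singleton true)) (measure_ne_top _ _), hθp, measure_univ]
  have ht_integral : (∫ w, t w ∂ℙ) = 1 - p := by
    rw [ht_eq, integral_indicator_const _ ht_set, measureReal_def, htprob, smul_eq_mul, mul_one,
      ENNReal.toReal_sub_of_le (ENNReal.ofReal_le_one.mpr hp1) ENNReal.one_ne_top]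
    rw [ENNReal.toReal_one, ENNReal.toReal_ofReal hp0.le]
  -- the key variance bound
  have hkey : (∫ w, ‖S w - m‖ ^ 2 ∂ℙ)
      ≤ (A - B) * Lplus ^ 2 * ‖x' - x‖ ^ 2 + B * Lpm ^ 2 * ‖x' - x‖ ^ 2 := by
    have hAB : (∫ w, ‖S w - m‖ ^ 2 ∂ℙ)
        ≤ A * ((n : ℝ)⁻¹ * ∑ i, ‖a i‖ ^ 2) - B * ‖m‖ ^ 2 := hABineq a
    have h1 : (n : ℝ)⁻¹ * ∑ i, ‖a i‖ ^ 2 ≤ Lplus ^ 2 * ‖x' - x‖ ^ 2 := hLplus x' x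
    have h2 : (n : ℝ)⁻¹ * ∑ i, ‖a i‖ ^ 2 - ‖m‖ ^ 2 ≤ Lpm ^ 2 * ‖x' - x‖ ^ 2 := by
      have := hLpm x' x
      have hmx : gradient F x' - gradient F x = m := by rw [hm]; abel
      rwa [hmx] at this
    have e1 : (A - B) * ((n : ℝ)⁻¹ * ∑ i, ‖a i‖ ^ 2)
        ≤ (A - B) * (Lplus ^ 2 * ‖x' - x‖ ^ 2) :=
      mul_le_mul_of_nonneg_left h1 (sub_nonneg.mpr hAB0)
    have e2 : B * ((n : ℝ)⁻¹ * ∑ i, ‖a i‖ ^ 2 - ‖m‖ ^ 2)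
        ≤ B * (Lpm ^ 2 * ‖x' - x‖ ^ 2) :=
      mul_le_mul_of_nonneg_left h2 hB0
    calc (∫ w, ‖S w - m‖ ^ 2 ∂ℙ)
        ≤ A * ((n : ℝ)⁻¹ * ∑ i, ‖a i‖ ^ 2) - B * ‖m‖ ^ 2 := hAB
      _ = (A - B) * ((n : ℝ)⁻¹ * ∑ i, ‖a i‖ ^ 2)
            + B * ((n : ℝ)⁻¹ * ∑ i, ‖a i‖ ^ 2 - ‖m‖ ^ 2) := by ring
      _ ≤ (A - B) * (Lplus ^ 2 * ‖x' - x‖ ^ 2) + B * (Lpm ^ 2 * ‖x' - x‖ ^ 2) :=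
          add_le_add e1 e2
      _ = (A - B) * Lplus ^ 2 * ‖x' - x‖ ^ 2 + B * Lpm ^ 2 * ‖x' - x‖ ^ 2 := by ring
  have hp1' : (0 : ℝ) ≤ 1 - p := by linarith
  calc (∫ w, ‖g' w - gradient F x'‖ ^ 2 ∂ℙ)
      = ∫ w, t w * h w ∂ℙ := by rw [hpoint]
    _ = (∫ w, t w ∂ℙ) * ∫ w, h w ∂ℙ := hindep.integral_fun_mul_eq_mul_integral ht_int.1 hh_int.1
    _ = (1 - p) * (‖c‖ ^ 2 + ∫ w, ‖S w - m‖ ^ 2 ∂ℙ) := by rw [ht_integral, hhdef, hEh]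
    _ ≤ (1 - p) * (‖c‖ ^ 2 + ((A - B) * Lplus ^ 2 * ‖x' - x‖ ^ 2
          + B * Lpm ^ 2 * ‖x' - x‖ ^ 2)) := by
        apply mul_le_mul_of_nonneg_left _ hp1'
        exact add_le_add_right hkey _
    _ = (1 - p) * ((A - B) * Lplus ^ 2 + B * Lpm ^ 2) * ‖x' - x‖ ^ 2
          + (1 - p) * ‖g - gradient F x‖ ^ 2 := by rw [hcdef]; ring
end

section
/- Let f : ℝ^d → ℝ be differentiable with L_−-Lipschitz gradient (L_− > 0) and bounded below by f^inf ∈ ℝ. Let p ∈ (0,1], L̂ ≥ 0, and let γ > 0 satisfy γ ≤ 1/(L_− + √((1−p)/p)·L̂). On a probability space, let (x^t)_{t≥0} and (g^t)_{t≥0} be sequences of square-integrable ℝ^d-valued random vectors such that x^{t+1} = x^t − γ g^t almost surely for every t ≥ 0, x^0 is deterministic, g^0 = ∇f(x^0), and for every t ≥ 0 the variance recursion E[‖g^{t+1} − ∇f(x^{t+1})‖²] ≤ (1−p)·L̂²·E[‖x^{t+1} − x^t‖²] + (1−p)·E[‖g^t − ∇f(x^t)‖²] holds. Then for every T ≥ 1,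 (1/T)·Σ_{t=0}^{T−1} E[‖∇f(x^t)‖²] ≤ 2(f(x^0) − f^inf)/(γT). -/
open MeasureTheory ProbabilityTheory Finset

open MeasureTheory ProbabilityTheory InnerProductSpace Finset

section aux
variable {E : Type*} [NormedAddCommGroup E] [InnerProductSpace ℝ E] [CompleteSpace E]

local notation "⟪" a ", " b "⟫" => @inner ℝ _ _ a b

lemma grad_apply' (f : E → ℝ) (z v : E) :
    ⟪gradient f z, v⟫ = fderiv ℝ f z v := by
  rw [gradient, toDual_symm_apply]

lemma descent_aux (f : E → ℝ) (hdiff : Differentiable ℝ f)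
    (L : ℝ) (hlip : ∀ z y, ‖gradient f z - gradient f y‖ ≤ L * ‖z - y‖)
    (a v : E) :
    f (a + v) ≤ f a + ⟪gradient f a, v⟫ + L / 2 * ‖v‖ ^ 2 := by
  set φ : ℝ → ℝ := fun s => f (a + s • v) with hφ
  have hc : ∀ s : ℝ, HasDerivAt (fun s : ℝ => a + s • v) v s := by
    intro s
    simpa using ((hasDerivAt_id s).smul_const v).const_add a
  have hφd : ∀ s : ℝ, HasDerivAt φ ⟪gradient f (a + s • v), v⟫ s := by
    intro s
    have := (hdiff (a + s • v)).hasFDerivAt.comp_hasDerivAt s (hc s)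
    rw [grad_apply' f]; exact this
  set ψ : ℝ → ℝ := fun s => ⟪gradient f a, v⟫ * s + L * s ^ 2 * ‖v‖ ^ 2 / 2 - φ s with hψ
  have hψd : ∀ s : ℝ, HasDerivAt ψ
      (⟪gradient f a, v⟫ + L * (2 * s) * ‖v‖ ^ 2 / 2 - ⟪gradient f (a + s • v), v⟫) s := by
    intro s
    have h := (((hasDerivAt_id s).const_mul ⟪gradient f a, v⟫).add
      ((((hasDerivAt_pow 2 s).const_mul L).mul_const (‖v‖ ^ 2)).div_const 2)).sub (hφd s)
    refine h.congr_deriv ?_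
    push_cast; ring
  have hmono : MonotoneOn ψ (Set.Icc (0:ℝ) 1) := by
    apply monotoneOn_of_deriv_nonneg (convex_Icc 0 1)
    · exact fun s _ => ((hψd s).differentiableAt).continuousAt.continuousWithinAt
    · exact fun s _ => ((hψd s).differentiableAt).differentiableWithinAt
    · intro s hs
      rw [interior_Icc, Set.mem_Ioo] at hs
      rw [(hψd s).deriv]
      have key : ⟪gradient f (a + s • v) - gradient f a, v⟫ ≤ L * s * ‖v‖ ^ 2 := by
        calc ⟪gradient f (a + s • v) - gradient f a, v⟫
            ≤ ‖gradient f (a + s • v) - gradient f a‖ * ‖v‖ := real_inner_le_norm _ _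
          _ ≤ (L * ‖(a + s • v) - a‖) * ‖v‖ := by
              gcongr; exact hlip _ _
          _ = L * s * ‖v‖ ^ 2 := by
              rw [add_sub_cancel_left, norm_smul, Real.norm_eq_abs, abs_of_pos hs.1]; ring
      have := inner_sub_left (𝕜 := ℝ) (gradient f (a + s • v)) (gradient f a) v
      nlinarith [this, key]
  have h01 := hmono (Set.mem_Icc.2 ⟨le_refl 0, zero_le_one⟩)
    (Set.mem_Icc.2 ⟨zero_le_one, le_refl 1⟩) zero_le_one
  have hψ0 : ψ 0 = -f a := by simp [hψ, hφ]
  have hψ1 : ψ 1 = ⟪gradient f a, v⟫ + L * ‖v‖ ^ 2 / 2 - f (a + v) := by simp [hψ, hφ]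
  rw [hψ0, hψ1] at h01
  linarith

lemma f_bound_aux (f : E → ℝ) (hdiff : Differentiable ℝ f)
    (L : ℝ) (hL : 0 ≤ L) (hlip : ∀ z y, ‖gradient f z - gradient f y‖ ≤ L * ‖z - y‖)
    (a z : E) :
    |f z - f a| ≤ ‖gradient f a‖ * ‖z - a‖ + 3 / 2 * L * ‖z - a‖ ^ 2 := by
  have hup := descent_aux f hdiff L hlip a (z - a)
  rw [add_sub_cancel] at hup
  have h1 : ⟪gradient f a, z - a⟫ ≤ ‖gradient f a‖ * ‖z - a‖ := real_inner_le_norm _ _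
  have hlo := descent_aux f hdiff L hlip z (a - z)
  rw [add_sub_cancel] at hlo
  have h2 : ⟪gradient f z, a - z⟫ ≤ ‖gradient f z‖ * ‖a - z‖ := real_inner_le_norm _ _
  have h3 : ‖gradient f z‖ ≤ ‖gradient f a‖ + L * ‖z - a‖ := by
    have := hlip z a
    have h4 := norm_sub_norm_le (gradient f z) (gradient f a)
    linarith
  have h5 : ‖a - z‖ = ‖z - a‖ := norm_sub_rev _ _
  rw [h5] at hlo h2
  have hn : (0:ℝ) ≤ ‖z - a‖ := norm_nonneg _
  rw [abs_le]
  constructor <;> nlinarith [mul_le_mul_of_nonneg_right h3 hn]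

lemma sq_int {Ω : Type*} [MeasureSpace Ω] {X : Ω → E} (h : MemLp X 2 ℙ) :
    Integrable (fun w => ‖X w‖ ^ 2) ℙ := by
  have := h.integrable_norm_rpow two_ne_zero ENNReal.ofNat_ne_top
  simpa [ENNReal.toReal_ofNat, Real.rpow_natCast] using this

end aux


set_option maxHeartbeats 1000000 in
/-- Theorem 4 of the paper, abstract form. For MARINA-type iterates
`x^{t+1} = x^t − γ g^t` with `γ ≤ 1/(L₋ + √((1−p)/p)·L̂)` and the variance recursion
`E‖g^{t+1} − ∇f(x^{t+1})‖² ≤ (1−p)L̂²E‖x^{t+1} − x^t‖² + (1−p)E‖g^t − ∇f(x^t)‖²`,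
one has `(1/T)∑_{t<T} E‖∇f(x^t)‖² ≤ 2(f(x⁰) − f^inf)/(γT)`. -/
theorem marina_nonconvex_rate
    {d : ℕ} {Ω : Type*} [MeasureSpace Ω] [IsProbabilityMeasure (ℙ : Measure Ω)]
    (f : EuclideanSpace ℝ (Fin d) → ℝ) (hdiff : Differentiable ℝ f)
    (Lminus : ℝ) (hLminus : 0 < Lminus)
    (hlip : ∀ z y, ‖gradient f z - gradient f y‖ ≤ Lminus * ‖z - y‖)
    (finf : ℝ) (hbelow : ∀ z, finf ≤ f z)
    (p : ℝ) (hp0 : 0 < p) (hp1 : p ≤ 1)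
    (Lhat : ℝ) (hLhat : 0 ≤ Lhat)
    (γ : ℝ) (hγ0 : 0 < γ)
    (hγ : γ ≤ 1 / (Lminus + Real.sqrt ((1 - p) / p) * Lhat))
    (x g : ℕ → Ω → EuclideanSpace ℝ (Fin d))
    (hxL2 : ∀ t, MemLp (x t) 2 ℙ) (hgL2 : ∀ t, MemLp (g t) 2 ℙ)
    (hstep : ∀ t, ∀ᵐ w ∂ℙ, x (t + 1) w = x t w - γ • g t w)
    (x0 : EuclideanSpace ℝ (Fin d)) (hx0 : ∀ w, x 0 w = x0)
    (hg0 : ∀ w, g 0 w = gradient f (x 0 w))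
    (hrec : ∀ t, (∫ w, ‖g (t + 1) w - gradient f (x (t + 1) w)‖ ^ 2 ∂ℙ) ≤
      (1 - p) * Lhat ^ 2 * (∫ w, ‖x (t + 1) w - x t w‖ ^ 2 ∂ℙ)
        + (1 - p) * (∫ w, ‖g t w - gradient f (x t w)‖ ^ 2 ∂ℙ)) :
    ∀ T : ℕ, 1 ≤ T →
      (T : ℝ)⁻¹ * ∑ t ∈ Finset.range T, (∫ w, ‖gradient f (x t w)‖ ^ 2 ∂ℙ) ≤
        2 * (f x0 - finf) / (γ * T) := by
  -- continuity of the gradient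
  have hgradcont : Continuous (gradient f) := by
    apply (LipschitzWith.of_dist_le_mul (K := Lminus.toNNReal) ?_).continuous
    intro z y
    rw [dist_eq_norm, dist_eq_norm, Real.coe_toNNReal _ hLminus.le]
    exact hlip z y
  -- measurability / integrability facts
  have hxdiffL2 : ∀ t, MemLp (fun w => x t w - x0) 2 ℙ :=
    fun t => (hxL2 t).sub (memLp_const x0)
  have hgrad2 : ∀ t, MemLp (fun w => gradient f (x t w)) 2 ℙ := by
    intro t
    have hB : MemLp (fun w => ‖gradient f x0‖ + Lminus * ‖x t w - x0‖) 2 ℙ :=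
      MemLp.add (ε := ℝ) (memLp_const ‖gradient f x0‖) (MemLp.const_mul (𝕜 := ℝ) (hxdiffL2 t).norm Lminus)
    refine hB.of_le (hgradcont.comp_aestronglyMeasurable (hxL2 t).aestronglyMeasurable)
      (Filter.Eventually.of_forall fun w => ?_)
    have h1 := hlip (x t w) x0
    have h2 := norm_sub_norm_le (gradient f (x t w)) (gradient f x0)
    have h3 : ‖gradient f x0‖ + Lminus * ‖x t w - x0‖ ≤
        ‖‖gradient f x0‖ + Lminus * ‖x t w - x0‖‖ := le_abs_self _
    linarith
  have hdiff2 : ∀ t, MemLp (fun w => g t w - gradient f (x t w)) 2 ℙ :=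
    fun t => (hgL2 t).sub (hgrad2 t)
  have iN : ∀ t, Integrable (fun w => ‖gradient f (x t w)‖ ^ 2) ℙ := fun t => sq_int (hgrad2 t)
  have iH : ∀ t, Integrable (fun w => ‖g t w‖ ^ 2) ℙ := fun t => sq_int (hgL2 t)
  have iG : ∀ t, Integrable (fun w => ‖g t w - gradient f (x t w)‖ ^ 2) ℙ :=
    fun t => sq_int (hdiff2 t)
  have iXd : ∀ t, Integrable (fun w => ‖x t w - x0‖ ^ 2) ℙ := fun t => sq_int (hxdiffL2 t)
  have iXn : ∀ t, Integrable (fun w => ‖x t w - x0‖) ℙ := fun t =>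
    memLp_one_iff_integrable.mp ((hxdiffL2 t).norm.mono_exponent one_le_two)
  have iF : ∀ t, Integrable (fun w => f (x t w)) ℙ := by
    intro t
    have hbd : Integrable (fun w =>
        |f x0| + (‖gradient f x0‖ * ‖x t w - x0‖ + 3 / 2 * Lminus * ‖x t w - x0‖ ^ 2)) ℙ := by
      have i1 : Integrable (fun w => ‖gradient f x0‖ * ‖x t w - x0‖) ℙ := (iXn t).const_mul _
      have i2 : Integrable (fun w => 3 / 2 * Lminus * ‖x t w - x0‖ ^ 2) ℙ := (iXd t).const_mul _
      exact (integrable_const _).add (i1.add i2)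
    refine hbd.mono' (hdiff.continuous.comp_aestronglyMeasurable (hxL2 t).aestronglyMeasurable)
      (Filter.Eventually.of_forall fun w => ?_)
    have hfb := f_bound_aux f hdiff Lminus hLminus.le hlip x0 (x t w)
    have h2 : |f (x t w)| - |f x0| ≤ |f (x t w) - f x0| := by
      have := abs_sub_abs_le_abs_sub (f (x t w)) (f x0); linarith
    rw [Real.norm_eq_abs]
    linarith
  -- shorthand sequences
  set F : ℕ → ℝ := fun t => ∫ w, f (x t w) ∂ℙ with hF
  set N : ℕ → ℝ := fun t => ∫ w, ‖gradient f (x t w)‖ ^ 2 ∂ℙ with hN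
  set H : ℕ → ℝ := fun t => ∫ w, ‖g t w‖ ^ 2 ∂ℙ with hH
  set G : ℕ → ℝ := fun t => ∫ w, ‖g t w - gradient f (x t w)‖ ^ 2 ∂ℙ with hG
  have Hnn : ∀ t, 0 ≤ H t := fun t => integral_nonneg fun w => by positivity
  have Gnn : ∀ t, 0 ≤ G t := fun t => integral_nonneg fun w => by positivity
  -- step-size condition
  set s : ℝ := Real.sqrt ((1 - p) / p) with hs
  have hs0 : 0 ≤ s := Real.sqrt_nonneg _
  have hs2 : s ^ 2 = (1 - p) / p := Real.sq_sqrt (div_nonneg (by linarith) hp0.le)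
  have h1p : 1 - p = s ^ 2 * p := by field_simp [hs2]; rw [hs2]; field_simp
  have hden : 0 < Lminus + s * Lhat := by positivity
  have hg1 : γ * (Lminus + s * Lhat) ≤ 1 := by
    rw [← le_div_iff₀ hden]; exact hγ
  have hsq : (γ * (s * Lhat)) ^ 2 ≤ γ * (s * Lhat) := by
    nlinarith [mul_pos hγ0 hLminus, mul_nonneg hγ0.le (mul_nonneg hs0 hLhat)]
  have hkey : p * (Lminus * γ) + γ ^ 2 * (1 - p) * Lhat ^ 2 ≤ p := by
    rw [h1p]
    linarith [mul_le_mul_of_nonneg_left hsq hp0.le, mul_le_mul_of_nonneg_left hg1 hp0.le]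
  -- descent step (integrated)
  have step : ∀ t, F (t + 1) + γ / 2 * N t + γ / 2 * (1 - Lminus * γ) * H t
      ≤ F t + γ / 2 * G t := by
    intro t
    have pointwise : ∀ᵐ w ∂ℙ,
        f (x (t + 1) w) + γ / 2 * ‖gradient f (x t w)‖ ^ 2
          + γ / 2 * (1 - Lminus * γ) * ‖g t w‖ ^ 2
        ≤ f (x t w) + γ / 2 * ‖g t w - gradient f (x t w)‖ ^ 2 := by
      filter_upwards [hstep t] with w hw
      have hd := descent_aux f hdiff Lminus hlip (x t w) ((-γ) • g t w)
      have hxe : x t w + (-γ) • g t w = x (t + 1) w := by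
        rw [hw, neg_smul, sub_eq_add_neg]
      rw [hxe] at hd
      have hinner : (inner ℝ (gradient f (x t w)) ((-γ) • g t w) : ℝ)
          = -γ * inner ℝ (gradient f (x t w)) (g t w) := real_inner_smul_right _ _ _
      have hnrm : ‖(-γ) • g t w‖ ^ 2 = γ ^ 2 * ‖g t w‖ ^ 2 := by
        rw [norm_smul, Real.norm_eq_abs, abs_neg, abs_of_pos hγ0]; ring
      have hpol : ‖g t w - gradient f (x t w)‖ ^ 2
          = ‖g t w‖ ^ 2 - 2 * inner ℝ (g t w) (gradient f (x t w)) + ‖gradient f (x t w)‖ ^ 2 :=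
        norm_sub_sq_real _ _
      have hcomm : (inner ℝ (g t w) (gradient f (x t w)) : ℝ)
          = inner ℝ (gradient f (x t w)) (g t w) := real_inner_comm _ _
      rw [hinner, hnrm] at hd
      rw [hpol, hcomm]
      linarith [hd]
    have iN' : Integrable (fun w => γ / 2 * ‖gradient f (x t w)‖ ^ 2) ℙ := (iN t).const_mul _
    have iH' : Integrable (fun w => γ / 2 * (1 - Lminus * γ) * ‖g t w‖ ^ 2) ℙ :=
      (iH t).const_mul _
    have iG' : Integrable (fun w => γ / 2 * ‖g t w - gradient f (x t w)‖ ^ 2) ℙ :=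
      (iG t).const_mul _
    have iFN : Integrable (fun w => f (x (t + 1) w) + γ / 2 * ‖gradient f (x t w)‖ ^ 2) ℙ :=
      (iF (t + 1)).add iN'
    have intL : Integrable (fun w =>
        f (x (t + 1) w) + γ / 2 * ‖gradient f (x t w)‖ ^ 2
          + γ / 2 * (1 - Lminus * γ) * ‖g t w‖ ^ 2) ℙ := iFN.add iH'
    have intR : Integrable (fun w =>
        f (x t w) + γ / 2 * ‖g t w - gradient f (x t w)‖ ^ 2) ℙ := (iF t).add iG'
    have hmono := integral_mono_ae intL intR pointwise
    rw [integral_add iFN iH', integral_add (iF (t + 1)) iN', integral_add (iF t) iG',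
      integral_const_mul, integral_const_mul, integral_const_mul] at hmono
    exact hmono
  -- variance recursion in shorthand
  have hrec' : ∀ t, G (t + 1) ≤ (1 - p) * Lhat ^ 2 * (γ ^ 2 * H t) + (1 - p) * G t := by
    intro t
    have hXg : (∫ w, ‖x (t + 1) w - x t w‖ ^ 2 ∂ℙ) = γ ^ 2 * H t := by
      show _ = γ ^ 2 * ∫ w, ‖g t w‖ ^ 2 ∂ℙ
      rw [← integral_const_mul]
      refine integral_congr_ae ?_
      filter_upwards [hstep t] with w hw
      rw [hw]
      have hsub : x t w - γ • g t w - x t w = (-γ) • g t w := by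
        rw [neg_smul, sub_sub_cancel_left]
      rw [hsub, norm_smul, Real.norm_eq_abs, abs_neg, abs_of_pos hγ0, mul_pow]
    have h := hrec t
    rw [hXg] at h
    exact h
  -- Lyapunov decrease
  have hdec : ∀ t, F (t + 1) + γ / (2 * p) * G (t + 1) + γ / 2 * N t
      ≤ F t + γ / (2 * p) * G t := by
    intro t
    have e1 : γ / (2 * p) * G (t + 1)
        ≤ γ / (2 * p) * ((1 - p) * Lhat ^ 2 * (γ ^ 2 * H t) + (1 - p) * G t) :=
      mul_le_mul_of_nonneg_left (hrec' t) (by positivity)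
    have e4 : γ / (2 * p) * ((1 - p) * Lhat ^ 2 * (γ ^ 2 * H t) + (1 - p) * G t)
        = γ / (2 * p) * ((1 - p) * Lhat ^ 2 * γ ^ 2) * H t
          + γ / (2 * p) * (1 - p) * G t := by ring
    have e2 : γ / (2 * p) * ((1 - p) * Lhat ^ 2 * γ ^ 2) ≤ γ / 2 * (1 - Lminus * γ) := by
      rw [div_mul_eq_mul_div, div_le_iff₀ (by positivity : (0:ℝ) < 2 * p)]
      linarith [mul_le_mul_of_nonneg_left hkey hγ0.le]
    have e2' : γ / (2 * p) * ((1 - p) * Lhat ^ 2 * γ ^ 2) * H t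
        ≤ γ / 2 * (1 - Lminus * γ) * H t := mul_le_mul_of_nonneg_right e2 (Hnn t)
    have e3 : γ / 2 * G t + γ / (2 * p) * (1 - p) * G t = γ / (2 * p) * G t := by
      field_simp
      ring
    have hst := step t
    linarith [e1, e4, e2', e3, hst]
  -- telescoping
  have tele : ∀ T : ℕ, F T + γ / (2 * p) * G T + γ / 2 * ∑ t ∈ Finset.range T, N t
      ≤ F 0 + γ / (2 * p) * G 0 := by
    intro T
    induction T with
    | zero => simp
    | succ n ih =>
      have hd := hdec n
      rw [Finset.sum_range_succ]
      linarith
  -- boundary values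
  have hF0 : F 0 = f x0 := by
    show (∫ w, f (x 0 w) ∂ℙ) = f x0
    simp only [hx0]
    simp
  have hG0 : G 0 = 0 := by
    show (∫ w, ‖g 0 w - gradient f (x 0 w)‖ ^ 2 ∂ℙ) = 0
    simp only [hg0]
    simp
  have hFT : ∀ T, finf ≤ F T := by
    intro T
    have h := integral_mono (integrable_const finf) (iF T) (fun w => hbelow (x T w))
    simpa using h
  -- conclusion
  intro T hT
  have hTpos : (0:ℝ) < T := by
    have : (0:ℕ) < T := hT
    exact_mod_cast this
  have hsum : ∑ t ∈ Finset.range T, N t ≤ 2 * (f x0 - finf) / γ := by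
    have h1 := tele T
    rw [hF0, hG0] at h1
    have h2 := hFT T
    have h3 : 0 ≤ γ / (2 * p) * G T := mul_nonneg (by positivity) (Gnn T)
    rw [le_div_iff₀ hγ0]
    linarith
  have heq : 2 * (f x0 - finf) / (γ * T) = (T:ℝ)⁻¹ * (2 * (f x0 - finf) / γ) := by
    rw [inv_mul_eq_div, div_div]
  rw [heq]
  exact mul_le_mul_of_nonneg_left hsum (by positivity)
end

section
/- Let f : ℝ^d → ℝ be differentiable with L_−-Lipschitz gradient (L_− > 0), bounded below, attaining infimum value f* = inf_x f(x) ∈ ℝ, and satisfying the Polyak–Łojasiewicz condition with μ > 0: ‖∇f(x)‖² ≥ 2μ(f(x) − f*) for all x ∈ ℝ^d. Let p ∈ (0,1], L̂ ≥ 0, and let γ > 0 satisfy γ ≤ min{ 1/(L_− + √(2(1−p)/p)·L̂), p/(2μ) }. On a probability space, let (x^t)_{t≥0} and (g^t)_{t≥0} be sequences of square-integrable ℝ^d-valued random vectors such that x^{t+1} = x^t − γ g^t almost surely for every t ≥ 0, x^0 is deterministic, g^0 = ∇f(x^0), and for every t ≥ 0 the variance recursion E[‖g^{t+1} − ∇f(x^{t+1})‖²]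 ≤ (1−p)·L̂²·E[‖x^{t+1} − x^t‖²] + (1−p)·E[‖g^t − ∇f(x^t)‖²] holds. Then for every T ≥ 0, E[f(x^T) − f*] ≤ (1 − γμ)^T · (f(x^0) − f*). -/
open MeasureTheory ProbabilityTheory Finset
open scoped RealInnerProductSpace ENNReal

section Aux

variable {E : Type*} [NormedAddCommGroup E] [InnerProductSpace ℝ E] [CompleteSpace E]

lemma grad_lipschitz_continuous (f : E → ℝ) {L : ℝ} (hL : 0 ≤ L)
    (hlip : ∀ z y, ‖gradient f z - gradient f y‖ ≤ L * ‖z - y‖) :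
    Continuous (gradient f) := by
  refine (LipschitzWith.of_dist_le_mul (K := L.toNNReal) fun a b => ?_).continuous
  rw [dist_eq_norm, dist_eq_norm]
  simpa [Real.coe_toNNReal L hL] using hlip a b

lemma descent_lemma (f : E → ℝ) (hdiff : Differentiable ℝ f) {L : ℝ} (hL : 0 ≤ L)
    (hlip : ∀ z y, ‖gradient f z - gradient f y‖ ≤ L * ‖z - y‖) (x v : E) :
    f (x + v) ≤ f x + ⟪gradient f x, v⟫ + L / 2 * ‖v‖ ^ 2 := by
  have hgc : Continuous (gradient f) := grad_lipschitz_continuous f hL hlip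
  have hline : ∀ t : ℝ, HasDerivAt (fun s : ℝ => f (x + s • v))
      ⟪gradient f (x + t • v), v⟫ t := by
    intro t
    have h1 : HasDerivAt (fun s : ℝ => x + s • v) v t := by
      simpa using ((hasDerivAt_id t).smul_const v).const_add x
    have h2 := ((hdiff (x + t • v)).hasGradientAt.hasFDerivAt).comp_hasDerivAt t h1
    simpa [InnerProductSpace.toDual_apply_apply, Function.comp_def] using h2
  have hcont : Continuous fun t : ℝ => ⟪gradient f (x + t • v), v⟫ := by
    exact (hgc.comp (by continuity)).inner continuous_const
  have key : f (x + v) - f x = ∫ t in (0:ℝ)..1, ⟪gradient f (x + t • v), v⟫ := by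
    rw [intervalIntegral.integral_eq_sub_of_hasDerivAt (fun t _ => hline t)
      (hcont.intervalIntegrable 0 1)]
    norm_num
  have hcont2 : Continuous fun t : ℝ => ⟪gradient f x, v⟫ + L * t * ‖v‖ ^ 2 := by
    continuity
  have bound : (∫ t in (0:ℝ)..1, ⟪gradient f (x + t • v), v⟫) ≤
      ∫ t in (0:ℝ)..1, (⟪gradient f x, v⟫ + L * t * ‖v‖ ^ 2) := by
    apply intervalIntegral.integral_mono_on (by norm_num) (hcont.intervalIntegrable 0 1)
      (hcont2.intervalIntegrable 0 1)
    intro t ht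
    have h3 : ⟪gradient f (x + t • v) - gradient f x, v⟫ ≤ L * t * ‖v‖ ^ 2 := by
      calc ⟪gradient f (x + t • v) - gradient f x, v⟫
          ≤ ‖gradient f (x + t • v) - gradient f x‖ * ‖v‖ := real_inner_le_norm _ _
        _ ≤ (L * ‖(x + t • v) - x‖) * ‖v‖ :=
            mul_le_mul_of_nonneg_right (hlip _ _) (norm_nonneg _)
        _ = L * t * ‖v‖ ^ 2 := by
            rw [add_sub_cancel_left, norm_smul, Real.norm_eq_abs, abs_of_nonneg ht.1]
            ring
    have h4 : ⟪gradient f (x + t • v) - gradient f x, v⟫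
        = ⟪gradient f (x + t • v), v⟫ - ⟪gradient f x, v⟫ := inner_sub_left _ _ _
    linarith
  have hval : (∫ t in (0:ℝ)..1, (⟪gradient f x, v⟫ + L * t * ‖v‖ ^ 2))
      = ⟪gradient f x, v⟫ + L / 2 * ‖v‖ ^ 2 := by
    have : (fun t : ℝ => ⟪gradient f x, v⟫ + L * t * ‖v‖ ^ 2)
        = fun t : ℝ => ⟪gradient f x, v⟫ + (L * ‖v‖ ^ 2) * t := by
      funext t; ring
    rw [this, intervalIntegral.integral_add (intervalIntegrable_const)
      ((by continuity : Continuous fun t : ℝ => (L * ‖v‖ ^ 2) * t).intervalIntegrable 0 1),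
      intervalIntegral.integral_const, intervalIntegral.integral_const_mul,
      integral_id]
    norm_num; ring
  linarith

lemma key_pointwise (f : E → ℝ) (hdiff : Differentiable ℝ f) {L μ γ fstar : ℝ} (hL : 0 ≤ L)
    (hlip : ∀ z y, ‖gradient f z - gradient f y‖ ≤ L * ‖z - y‖)
    (hPL : ∀ z, ‖gradient f z‖ ^ 2 ≥ 2 * μ * (f z - fstar))
    (hγ0 : 0 ≤ γ) (X G : E) :
    f (X - γ • G) - fstar ≤ (1 - γ * μ) * (f X - fstar)
      + γ / 2 * ‖G - gradient f X‖ ^ 2 - (γ / 2 - L * γ ^ 2 / 2) * ‖G‖ ^ 2 := by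
  have hd := descent_lemma f hdiff hL hlip X (-(γ • G))
  rw [show X + -(γ • G) = X - γ • G from (sub_eq_add_neg X (γ • G)).symm] at hd
  have hi : ⟪gradient f X, -(γ • G)⟫ = -(γ * ⟪gradient f X, G⟫) := by
    rw [inner_neg_right, real_inner_smul_right]
  have hn : ‖-(γ • G)‖ ^ 2 = γ ^ 2 * ‖G‖ ^ 2 := by
    rw [norm_neg, norm_smul, Real.norm_eq_abs, mul_pow, sq_abs]
  rw [hi, hn] at hd
  have hid : ‖G - gradient f X‖ ^ 2
      = ‖G‖ ^ 2 - 2 * ⟪G, gradient f X⟫ + ‖gradient f X‖ ^ 2 :=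
    norm_sub_sq_real G (gradient f X)
  have hcomm : ⟪gradient f X, G⟫ = ⟪G, gradient f X⟫ := real_inner_comm _ _
  have hpl := hPL X
  have hpl' : γ / 2 * (2 * μ * (f X - fstar)) ≤ γ / 2 * ‖gradient f X‖ ^ 2 :=
    mul_le_mul_of_nonneg_left hpl (by linarith)
  nlinarith [hd, hid, hcomm, hpl']

omit [InnerProductSpace ℝ E] [CompleteSpace E] in
lemma sq_norm_integrable {Ω : Type*} [MeasureSpace Ω] {F : Ω → E} (h : MemLp F 2 ℙ) :
    Integrable (fun w => ‖F w‖ ^ 2) ℙ := by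
  have h2 := h.integrable_norm_rpow (by norm_num) (by norm_num)
  have : ((2 : ℝ≥0∞).toReal) = ((2 : ℕ) : ℝ) := by norm_num
  simpa [this, Real.rpow_natCast] using h2

end Aux

set_option maxHeartbeats 2000000 in
/-- Theorem 7 of the paper, abstract form; PŁ regime. Under the PŁ
condition `‖∇f(x)‖² ≥ 2μ(f(x) − f*)`, MARINA-type iterates `x^{t+1} = x^t − γ g^t` with
`γ ≤ min{1/(L₋ + √(2(1−p)/p)·L̂), p/(2μ)}` and the variance recursion satisfy
`E[f(x^T) − f*] ≤ (1 − γμ)^T (f(x⁰) − f*)`. -/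
theorem marina_PL_linear_rate
    {d : ℕ} {Ω : Type*} [MeasureSpace Ω] [IsProbabilityMeasure (ℙ : Measure Ω)]
    (f : EuclideanSpace ℝ (Fin d) → ℝ) (hdiff : Differentiable ℝ f)
    (Lminus : ℝ) (hLminus : 0 < Lminus)
    (hlip : ∀ z y, ‖gradient f z - gradient f y‖ ≤ Lminus * ‖z - y‖)
    (fstar : ℝ) (hfstar : IsGLB (Set.range f) fstar)
    (μ : ℝ) (hμ : 0 < μ)
    (hPL : ∀ z, ‖gradient f z‖ ^ 2 ≥ 2 * μ * (f z - fstar))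
    (p : ℝ) (hp0 : 0 < p) (hp1 : p ≤ 1)
    (Lhat : ℝ) (hLhat : 0 ≤ Lhat)
    (γ : ℝ) (hγ0 : 0 < γ)
    (hγ : γ ≤ min (1 / (Lminus + Real.sqrt (2 * (1 - p) / p) * Lhat)) (p / (2 * μ)))
    (x g : ℕ → Ω → EuclideanSpace ℝ (Fin d))
    (hxL2 : ∀ t, MemLp (x t) 2 ℙ) (hgL2 : ∀ t, MemLp (g t) 2 ℙ)
    (hstep : ∀ t, ∀ᵐ w ∂ℙ, x (t + 1) w = x t w - γ • g t w)
    (x0 : EuclideanSpace ℝ (Fin d)) (hx0 : ∀ w, x 0 w = x0)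
    (hg0 : ∀ w, g 0 w = gradient f (x 0 w))
    (hrec : ∀ t, (∫ w, ‖g (t + 1) w - gradient f (x (t + 1) w)‖ ^ 2 ∂ℙ) ≤
      (1 - p) * Lhat ^ 2 * (∫ w, ‖x (t + 1) w - x t w‖ ^ 2 ∂ℙ)
        + (1 - p) * (∫ w, ‖g t w - gradient f (x t w)‖ ^ 2 ∂ℙ)) :
    ∀ T : ℕ,
      (∫ w, (f (x T w) - fstar) ∂ℙ) ≤ (1 - γ * μ) ^ T * (f x0 - fstar) := by
  set a : ℝ := Real.sqrt (2 * (1 - p) / p) * Lhat with ha_def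
  have hL0 : (0 : ℝ) ≤ Lminus := hLminus.le
  have ha0 : 0 ≤ a := mul_nonneg (Real.sqrt_nonneg _) hLhat
  have hLa : 0 < Lminus + a := by linarith
  have hγ1 : γ ≤ 1 / (Lminus + a) := hγ.trans (min_le_left _ _)
  have hγ2 : γ ≤ p / (2 * μ) := hγ.trans (min_le_right _ _)
  have hγLa : γ * (Lminus + a) ≤ 1 := by
    have := mul_le_mul_of_nonneg_right hγ1 hLa.le
    rwa [one_div, inv_mul_cancel₀ hLa.ne'] at this
  have hγμ : γ * μ ≤ p / 2 := by
    have h2μ : (0:ℝ) < 2 * μ := by linarith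
    have := mul_le_mul_of_nonneg_right hγ2 hμ.le
    calc γ * μ ≤ p / (2 * μ) * μ := this
      _ = p / 2 := by field_simp
  have h1γμ : 0 ≤ 1 - γ * μ := by nlinarith
  have ha2 : a ^ 2 = 2 * (1 - p) / p * Lhat ^ 2 := by
    rw [ha_def, mul_pow, Real.sq_sqrt (div_nonneg (by linarith) hp0.le)]
  -- continuity / measurability facts
  have hfc : Continuous f := hdiff.continuous
  have hgc : Continuous (gradient f) := grad_lipschitz_continuous f hL0 hlip
  have hxm : ∀ t, AEStronglyMeasurable (x t) ℙ := fun t => (hxL2 t).aestronglyMeasurable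
  have hgradL2 : ∀ t, MemLp (fun w => gradient f (x t w)) 2 ℙ := by
    intro t
    have hmaj : MemLp (fun w => ‖gradient f x0‖ + Lminus * ‖x t w - x0‖) 2 ℙ :=
      (memLp_const (‖gradient f x0‖)).add (((hxL2 t).sub (memLp_const x0)).norm.const_mul Lminus)
    refine MemLp.of_le hmaj (hgc.comp_aestronglyMeasurable (hxm t)) ?_
    filter_upwards with w
    have h1 : ‖gradient f (x t w)‖ ≤ ‖gradient f x0‖ + Lminus * ‖x t w - x0‖ := by
      have h2 := hlip (x t w) x0
      calc ‖gradient f (x t w)‖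
          = ‖gradient f x0 + (gradient f (x t w) - gradient f x0)‖ := by
              congr 1; abel
        _ ≤ ‖gradient f x0‖ + ‖gradient f (x t w) - gradient f x0‖ := norm_add_le _ _
        _ ≤ ‖gradient f x0‖ + Lminus * ‖x t w - x0‖ := by linarith
    exact h1.trans (le_abs_self _)
  have hVint : ∀ t, Integrable (fun w => ‖g t w - gradient f (x t w)‖ ^ 2) ℙ :=
    fun t => sq_norm_integrable ((hgL2 t).sub (hgradL2 t))
  have hG2int : ∀ t, Integrable (fun w => ‖g t w‖ ^ 2) ℙ := fun t => sq_norm_integrable (hgL2 t)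
  have hfstar_le : ∀ z, fstar ≤ f z := fun z => hfstar.1 (Set.mem_range_self z)
  have hfint : ∀ t, Integrable (fun w => f (x t w) - fstar) ℙ := by
    intro t
    have hmaj : Integrable (fun w => (f x0 - fstar) + ‖gradient f x0‖ * ‖x t w - x0‖
        + Lminus / 2 * ‖x t w - x0‖ ^ 2) ℙ := by
      refine (Integrable.add (integrable_const _) ?_).add ?_
      · exact ((((hxL2 t).sub (memLp_const x0)).norm.integrable (by norm_num))).const_mul _
      · exact (sq_norm_integrable ((hxL2 t).sub (memLp_const x0))).const_mul _
    refine Integrable.mono' hmaj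
      ((hfc.comp_aestronglyMeasurable (hxm t)).sub aestronglyMeasurable_const) ?_
    filter_upwards with w
    have hub : f (x t w) - fstar ≤ (f x0 - fstar) + ‖gradient f x0‖ * ‖x t w - x0‖
        + Lminus / 2 * ‖x t w - x0‖ ^ 2 := by
      have hd := descent_lemma f hdiff hL0 hlip x0 (x t w - x0)
      rw [add_sub_cancel] at hd
      have hip : ⟪gradient f x0, x t w - x0⟫ ≤ ‖gradient f x0‖ * ‖x t w - x0‖ :=
        real_inner_le_norm _ _
      linarith
    have hlb : 0 ≤ f (x t w) - fstar := by linarith [hfstar_le (x t w)]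
    rw [Real.norm_eq_abs, abs_of_nonneg hlb]
    exact hub
  -- abbreviations
  set A : ℕ → ℝ := fun t => ∫ w, (f (x t w) - fstar) ∂ℙ with hA
  set V : ℕ → ℝ := fun t => ∫ w, ‖g t w - gradient f (x t w)‖ ^ 2 ∂ℙ with hV
  set G2 : ℕ → ℝ := fun t => ∫ w, ‖g t w‖ ^ 2 ∂ℙ with hG2
  have hV0 : ∀ t, 0 ≤ V t := fun t => integral_nonneg fun w => sq_nonneg _
  have hG20 : ∀ t, 0 ≤ G2 t := fun t => integral_nonneg fun w => sq_nonneg _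
  have hD : ∀ t, (∫ w, ‖x (t + 1) w - x t w‖ ^ 2 ∂ℙ) = γ ^ 2 * G2 t := by
    intro t
    calc (∫ w, ‖x (t + 1) w - x t w‖ ^ 2 ∂ℙ) = ∫ w, γ ^ 2 * ‖g t w‖ ^ 2 ∂ℙ := by
          refine integral_congr_ae ?_
          filter_upwards [hstep t] with w hw
          rw [hw, show x t w - γ • g t w - x t w = -(γ • g t w) by abel, norm_neg, norm_smul,
            Real.norm_eq_abs, mul_pow, sq_abs]
      _ = γ ^ 2 * G2 t := integral_const_mul _ _
  have hstepA : ∀ t, A (t + 1) ≤ (1 - γ * μ) * A t + γ / 2 * V t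
      - (γ / 2 - Lminus * γ ^ 2 / 2) * G2 t := by
    intro t
    have hpt : ∀ᵐ w ∂ℙ, f (x (t + 1) w) - fstar ≤ (1 - γ * μ) * (f (x t w) - fstar)
        + γ / 2 * ‖g t w - gradient f (x t w)‖ ^ 2
        - (γ / 2 - Lminus * γ ^ 2 / 2) * ‖g t w‖ ^ 2 := by
      filter_upwards [hstep t] with w hw
      rw [hw]
      exact key_pointwise f hdiff hL0 hlip hPL hγ0.le (x t w) (g t w)
    have hI1 : Integrable (fun w => (1 - γ * μ) * (f (x t w) - fstar)) ℙ :=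
      (hfint t).const_mul _
    have hI2 : Integrable (fun w => γ / 2 * ‖g t w - gradient f (x t w)‖ ^ 2) ℙ :=
      (hVint t).const_mul _
    have hI3 : Integrable (fun w => (γ / 2 - Lminus * γ ^ 2 / 2) * ‖g t w‖ ^ 2) ℙ :=
      (hG2int t).const_mul _
    have hI12 : Integrable (fun w => (1 - γ * μ) * (f (x t w) - fstar)
        + γ / 2 * ‖g t w - gradient f (x t w)‖ ^ 2) ℙ := hI1.add hI2
    have hmono := integral_mono_ae (hfint (t + 1)) (hI12.sub hI3) hpt
    have hsplit : (∫ w, ((1 - γ * μ) * (f (x t w) - fstar)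
        + γ / 2 * ‖g t w - gradient f (x t w)‖ ^ 2
        - (γ / 2 - Lminus * γ ^ 2 / 2) * ‖g t w‖ ^ 2) ∂ℙ)
        = (1 - γ * μ) * A t + γ / 2 * V t - (γ / 2 - Lminus * γ ^ 2 / 2) * G2 t := by
      rw [integral_sub hI12 hI3, integral_add hI1 hI2, integral_const_mul, integral_const_mul,
        integral_const_mul]
    calc A (t + 1) ≤ _ := hmono
      _ = _ := hsplit
  have hstepV : ∀ t, V (t + 1) ≤ (1 - p) * Lhat ^ 2 * (γ ^ 2 * G2 t) + (1 - p) * V t := by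
    intro t
    have h := hrec t
    rw [hD t] at h
    exact h
  -- coefficient inequalities
  have c1 : γ / 2 + (γ / p) * (1 - p) ≤ (1 - γ * μ) * (γ / p) := by
    have hkey : (1 - γ * μ) * (γ / p) - (γ / 2 + (γ / p) * (1 - p))
        = (γ / p) * (p / 2 - γ * μ) := by field_simp; ring
    nlinarith [mul_nonneg (div_nonneg hγ0.le hp0.le) (by linarith : (0:ℝ) ≤ p / 2 - γ * μ)]
  have c2 : (γ / p) * ((1 - p) * Lhat ^ 2 * γ ^ 2) ≤ γ / 2 - Lminus * γ ^ 2 / 2 := by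
    have hγa1 : γ * a ≤ 1 := by nlinarith
    have hsq : (γ * a) ^ 2 ≤ γ * a := by nlinarith [mul_nonneg hγ0.le ha0]
    have hkey : γ ^ 2 * a ^ 2 + γ * Lminus ≤ 1 := by nlinarith
    have heq : (γ / p) * ((1 - p) * Lhat ^ 2 * γ ^ 2) = γ ^ 3 * a ^ 2 / 2 := by
      rw [ha2]; field_simp
    rw [heq]
    nlinarith [mul_le_mul_of_nonneg_left hkey (by positivity : (0:ℝ) ≤ γ / 2)]
  -- Lyapunov recursion
  have hq0 : 0 ≤ γ / p := div_nonneg hγ0.le hp0.le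
  have hΦstep : ∀ t, A (t + 1) + (γ / p) * V (t + 1)
      ≤ (1 - γ * μ) * (A t + (γ / p) * V t) := by
    intro t
    have h1 := hstepA t
    have h2 := mul_le_mul_of_nonneg_left (hstepV t) hq0
    have h3 := mul_le_mul_of_nonneg_right c1 (hV0 t)
    have h4 := mul_le_mul_of_nonneg_right c2 (hG20 t)
    nlinarith [h1, h2, h3, h4]
  have hΦT : ∀ T, A T + (γ / p) * V T ≤ (1 - γ * μ) ^ T * (A 0 + (γ / p) * V 0) := by
    intro T
    induction T with
    | zero => simp
    | succ n ih =>
        calc A (n + 1) + (γ / p) * V (n + 1) ≤ (1 - γ * μ) * (A n + (γ / p) * V n) := hΦstep n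
          _ ≤ (1 - γ * μ) * ((1 - γ * μ) ^ n * (A 0 + (γ / p) * V 0)) :=
              mul_le_mul_of_nonneg_left ih h1γμ
          _ = (1 - γ * μ) ^ (n + 1) * (A 0 + (γ / p) * V 0) := by ring
  have hA0 : A 0 = f x0 - fstar := by
    show (∫ w, (f (x 0 w) - fstar) ∂ℙ) = f x0 - fstar
    simp only [hx0]
    rw [integral_const]
    simp
  have hV00 : V 0 = 0 := by
    show (∫ w, ‖g 0 w - gradient f (x 0 w)‖ ^ 2 ∂ℙ) = 0
    have h : ∀ w, ‖g 0 w - gradient f (x 0 w)‖ ^ 2 = 0 := by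
      intro w; rw [hg0 w]; simp
    simp [h]
  intro T
  have h5 := hΦT T
  rw [hA0, hV00] at h5
  have h7 : A T ≤ A T + (γ / p) * V T := by nlinarith [mul_nonneg hq0 (hV0 T)]
  calc (∫ w, (f (x T w) - fstar) ∂ℙ) = A T := rfl
    _ ≤ A T + (γ / p) * V T := h7
    _ ≤ (1 - γ * μ) ^ T * (f x0 - fstar + (γ / p) * 0) := h5
    _ = (1 - γ * μ) ^ T * (f x0 - fstar) := by ring
end

section
/- Let a ≥ 0, b ≥ 0, and y_min ∈ (0, 1/2]. Define f(x, y) = (x + (1−x)y)·(a + b·√((1/x − 1)(1/y − 1))) for x ∈ (0,1] and y ∈ [y_min, 1]. Then for all x ∈ (0,1] and y ∈ [y_min, 1], f(x, y) ≥ (1/2)·min{a, a·y_min + b}. -/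
/-- Lemma 8 of the paper, technical complexity bound. For
`f(x,y) = (x + (1−x)y)(a + b√((1/x − 1)(1/y − 1)))` with `a, b ≥ 0`, `0 < x ≤ 1`, and
`y_min ≤ y ≤ 1` where `0 < y_min ≤ 1/2`, one has `f(x,y) ≥ ½ min{a, a·y_min + b}`. -/
theorem complexity_bound_technical_lemma
    (a b ymin : ℝ) (ha : 0 ≤ a) (hb : 0 ≤ b)
    (hymin0 : 0 < ymin) (hymin : ymin ≤ 1 / 2) :
    ∀ x y : ℝ, 0 < x → x ≤ 1 → ymin ≤ y → y ≤ 1 →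
      (1 / 2) * min a (a * ymin + b) ≤
        (x + (1 - x) * y) * (a + b * Real.sqrt ((1 / x - 1) * (1 / y - 1))) := by
  intro x y hx hx1 hy hy1
  have hy0 : 0 < y := lt_of_lt_of_le hymin0 hy
  set s := Real.sqrt ((1 / x - 1) * (1 / y - 1)) with hs
  have hs0 : 0 ≤ s := Real.sqrt_nonneg _
  set g := x + (1 - x) * y with hgdef
  clear_value s g
  have hg0 : 0 < g := by
    have : 0 ≤ (1 - x) * y := mul_nonneg (by linarith) hy0.le
    simp only [hgdef]; linarith
  have hgymin : ymin ≤ g := by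
    have : 0 ≤ x * (1 - y) := mul_nonneg hx.le (by linarith)
    simp only [hgdef]; nlinarith
  have habs : 0 ≤ a + b * s := by positivity
  rcases le_or_gt (1/2 : ℝ) x with hxc | hxc
  · -- g ≥ x ≥ 1/2
    have hg : (1/2 : ℝ) ≤ g := by
      have : 0 ≤ (1 - x) * y := mul_nonneg (by linarith) hy0.le
      simp only [hgdef]; linarith
    have hm : min a (a * ymin + b) ≤ a := min_le_left _ _
    nlinarith [mul_le_mul_of_nonneg_right hg habs, mul_nonneg hb hs0]
  · rcases le_or_gt (1/2 : ℝ) y with hyc | hyc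
    · have hg : (1/2 : ℝ) ≤ g := by
        have : 0 ≤ x * (1 - y) := mul_nonneg hx.le (by linarith)
        simp only [hgdef]; nlinarith
      have hm : min a (a * ymin + b) ≤ a := min_le_left _ _
      nlinarith [mul_le_mul_of_nonneg_right hg habs, mul_nonneg hb hs0]
    · -- both x, y < 1/2
      have hkey : x * y ≤ 4 * g ^ 2 * ((1 - x) * (1 - y)) := by
        have h1 : x * y ≤ g ^ 2 := by
          have h2 : (x + y) / 2 ≤ g := by
            have : 0 ≤ x * (1 - y) + y * (1 - x) := by nlinarith
            simp only [hgdef]; nlinarith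
          nlinarith [sq_nonneg (x - y), sq_nonneg (x + y)]
        have h4 : (1/4 : ℝ) ≤ (1 - x) * (1 - y) := by nlinarith
        have h3 : x * y * (1/4) ≤ g ^ 2 * ((1 - x) * (1 - y)) :=
          mul_le_mul h1 h4 (by norm_num) (sq_nonneg g)
        nlinarith [h3]
      have hE : (1 / (2 * g)) ^ 2 ≤ (1 / x - 1) * (1 / y - 1) := by
        have hrw : (1 / x - 1) * (1 / y - 1) = ((1 - x) * (1 - y)) / (x * y) := by
          field_simp
        rw [hrw, div_pow, one_pow, div_le_div_iff₀ (by positivity) (by positivity)]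
        calc 1 * (x * y) = x * y := by ring
          _ ≤ 4 * g ^ 2 * ((1 - x) * (1 - y)) := hkey
          _ = (1 - x) * (1 - y) * (2 * g) ^ 2 := by ring
      have hsge : 1 / (2 * g) ≤ s := by
        rw [hs]
        exact Real.le_sqrt' (by positivity) |>.mpr hE
      have hgs : (1 / 2 : ℝ) ≤ g * s := by
        have := mul_le_mul_of_nonneg_left hsge hg0.le
        have hcalc : g * (1 / (2 * g)) = 1 / 2 := by
          rw [mul_one_div, div_eq_div_iff (by positivity) (by norm_num)]; ring
        linarith [hcalc ▸ this]
      have hm : min a (a * ymin + b) ≤ a * ymin + b := min_le_right _ _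
      have h1 : a * ymin ≤ a * g := mul_le_mul_of_nonneg_left hgymin ha
      have h2 : b * (1 / 2) ≤ b * (g * s) := mul_le_mul_of_nonneg_left hgs hb
      have hag : 0 ≤ a * g := mul_nonneg ha hg0.le
      have hexp : g * (a + b * s) = a * g + b * (g * s) := by ring
      linarith
end

section
/- Let d, n, L_−, L_±, Δ₀, ε be positive reals with n ≥ 2. Define N(p) := (Δ₀/ε)·(p·d + (1−p)·(d/n))·(L_− + √((1−p)/p)·L_±) for p ∈ (0,1]. Then: (i) for all p ∈ (0,1], N(p) ≥ (Δ₀/(2ε))·min{ d·L_−, (d/n)·L_− + (d/√n)·L_± }; (ii) N(1/n) ≤ (2Δ₀/ε)·((d/n)·L_− + (d/√n)·L_±); and (iii) N(1) = (Δ₀/ε)·d·L_−. -/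
private lemma amgm_sqrt (A B : ℝ) (hA : 0 ≤ A) (hB : 0 ≤ B) :
    2 * Real.sqrt (A * B) ≤ A + B := by
  have h1 : Real.sqrt (A * B) = Real.sqrt A * Real.sqrt B := Real.sqrt_mul hA B
  nlinarith [Real.sq_sqrt hA, Real.sq_sqrt hB, sq_nonneg (Real.sqrt A - Real.sqrt B)]

set_option maxHeartbeats 1000000 in
/-- Lemma 9 of the paper, case `d ≥ n`. For the MARINA–PermK
communication complexity `N(p) = (Δ₀/ε)(pd + (1−p)d/n)(L₋ + √((1−p)/p)·L±)`:
(i) `N(p) ≥ (Δ₀/(2ε))·min{dL₋, (d/n)L₋ + (d/√n)L±}` for all `p ∈ (0,1]`;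
(ii) `N(1/n) ≤ (2Δ₀/ε)((d/n)L₋ + (d/√n)L±)`; (iii) `N(1) = (Δ₀/ε)dL₋`. -/
theorem permK_communication_complexity_d_ge_n
    (d n Lminus Lpm Δ₀ ε : ℝ)
    (hd : 0 < d) (hn : 2 ≤ n) (hLminus : 0 < Lminus) (hLpm : 0 < Lpm)
    (hΔ : 0 < Δ₀) (hε : 0 < ε)
    (N : ℝ → ℝ)
    (hN : ∀ p, N p =
      (Δ₀ / ε) * (p * d + (1 - p) * (d / n)) * (Lminus + Real.sqrt ((1 - p) / p) * Lpm)) :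
    (∀ p : ℝ, 0 < p → p ≤ 1 →
      (Δ₀ / (2 * ε)) * min (d * Lminus) ((d / n) * Lminus + (d / Real.sqrt n) * Lpm) ≤ N p) ∧
    N (1 / n) ≤ (2 * Δ₀ / ε) * ((d / n) * Lminus + (d / Real.sqrt n) * Lpm) ∧
    N 1 = (Δ₀ / ε) * d * Lminus := by
  have hn0 : (0:ℝ) < n := by linarith
  have hC : (0:ℝ) < Δ₀ / ε := by positivity
  have hs : (0:ℝ) < Real.sqrt n := Real.sqrt_pos.mpr hn0
  have hss : Real.sqrt n * Real.sqrt n = n := Real.mul_self_sqrt hn0.le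
  refine ⟨?_, ?_, ?_⟩
  · -- part (i)
    intro p hp hp1
    rw [hN]
    have hS : 0 ≤ Real.sqrt ((1 - p) / p) := Real.sqrt_nonneg _
    have hS2 : Real.sqrt ((1 - p) / p) ^ 2 = (1 - p) / p :=
      Real.sq_sqrt (div_nonneg (by linarith) hp.le)
    have hdn : (0:ℝ) < d / n := by positivity
    have hB0 : 0 ≤ (1 - p) * (d / n) := mul_nonneg (by linarith) hdn.le
    have hK0 : 0 ≤ p * d + (1 - p) * (d / n) := by
      nlinarith [mul_nonneg hp.le hd.le]
    by_cases hhalf : 1 / 2 ≤ p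
    · -- use the first component of the min
      have hmin : min (d * Lminus) ((d / n) * Lminus + (d / Real.sqrt n) * Lpm)
          ≤ d * Lminus := min_le_left _ _
      have key : (d / 2) * Lminus
          ≤ (p * d + (1 - p) * (d / n)) * (Lminus + Real.sqrt ((1 - p) / p) * Lpm) := by
        have h1 : d / 2 ≤ p * d + (1 - p) * (d / n) := by nlinarith
        have h2 : 0 ≤ (p * d + (1 - p) * (d / n)) * (Real.sqrt ((1 - p) / p) * Lpm) :=
          mul_nonneg hK0 (mul_nonneg hS hLpm.le)
        nlinarith [mul_le_mul_of_nonneg_right h1 hLminus.le]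
      calc (Δ₀ / (2 * ε)) * min (d * Lminus) ((d / n) * Lminus + (d / Real.sqrt n) * Lpm)
          ≤ (Δ₀ / (2 * ε)) * (d * Lminus) :=
            mul_le_mul_of_nonneg_left hmin (by positivity)
        _ = (Δ₀ / ε) * ((d / 2) * Lminus) := by ring
        _ ≤ (Δ₀ / ε) * ((p * d + (1 - p) * (d / n)) *
              (Lminus + Real.sqrt ((1 - p) / p) * Lpm)) :=
            mul_le_mul_of_nonneg_left key hC.le
        _ = (Δ₀ / ε) * (p * d + (1 - p) * (d / n)) *
              (Lminus + Real.sqrt ((1 - p) / p) * Lpm) := by ring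
    · -- p ≤ 1/2 : use the second component
      push_neg at hhalf
      have hp2 : (1:ℝ)/2 ≤ 1 - p := by linarith
      have hmin : min (d * Lminus) ((d / n) * Lminus + (d / Real.sqrt n) * Lpm)
          ≤ (d / n) * Lminus + (d / Real.sqrt n) * Lpm := min_le_right _ _
      -- AM–GM bound on K * S
      have hA : 0 ≤ p * d * Real.sqrt ((1 - p) / p) :=
        mul_nonneg (mul_nonneg hp.le hd.le) hS
      have hB : 0 ≤ (1 - p) * (d / n) * Real.sqrt ((1 - p) / p) := mul_nonneg hB0 hS
      have hAB : (p * d * Real.sqrt ((1 - p) / p)) *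
          ((1 - p) * (d / n) * Real.sqrt ((1 - p) / p)) = ((1 - p) * d) ^ 2 / n := by
        have h : (p * d * Real.sqrt ((1 - p) / p)) *
            ((1 - p) * (d / n) * Real.sqrt ((1 - p) / p))
            = p * (1 - p) * (d ^ 2 / n) * Real.sqrt ((1 - p) / p) ^ 2 := by ring
        rw [h, hS2]
        field_simp
      have hsqrtAB : Real.sqrt (((1 - p) * d) ^ 2 / n) = (1 - p) * d / Real.sqrt n := by
        rw [Real.sqrt_div (sq_nonneg _),
          Real.sqrt_sq (by nlinarith : (0:ℝ) ≤ (1 - p) * d)]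
      have amgm : 2 * ((1 - p) * d / Real.sqrt n)
          ≤ p * d * Real.sqrt ((1 - p) / p) + (1 - p) * (d / n) * Real.sqrt ((1 - p) / p) := by
        have h := amgm_sqrt _ _ hA hB
        rwa [hAB, hsqrtAB] at h
      have hKS : (1 / 2) * (d / Real.sqrt n)
          ≤ (p * d + (1 - p) * (d / n)) * Real.sqrt ((1 - p) / p) := by
        have ht : (0:ℝ) < d / Real.sqrt n := by positivity
        have h1 : (1 / 2) * (d / Real.sqrt n) ≤ 2 * ((1 - p) * d / Real.sqrt n) := by
          have h2 : (1 - p) * d / Real.sqrt n = (1 - p) * (d / Real.sqrt n) := by ring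
          rw [h2]
          nlinarith
        nlinarith [amgm, h1]
      have hKL : (1 / 2) * (d / n) ≤ p * d + (1 - p) * (d / n) := by
        nlinarith [mul_nonneg hp.le hd.le, mul_le_mul_of_nonneg_right hp2 hdn.le]
      have key : (1 / 2) * ((d / n) * Lminus + (d / Real.sqrt n) * Lpm)
          ≤ (p * d + (1 - p) * (d / n)) * (Lminus + Real.sqrt ((1 - p) / p) * Lpm) := by
        nlinarith [mul_le_mul_of_nonneg_right hKL hLminus.le,
          mul_le_mul_of_nonneg_right hKS hLpm.le]
      calc (Δ₀ / (2 * ε)) * min (d * Lminus) ((d / n) * Lminus + (d / Real.sqrt n) * Lpm)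
          ≤ (Δ₀ / (2 * ε)) * ((d / n) * Lminus + (d / Real.sqrt n) * Lpm) :=
            mul_le_mul_of_nonneg_left hmin (by positivity)
        _ = (Δ₀ / ε) * ((1 / 2) * ((d / n) * Lminus + (d / Real.sqrt n) * Lpm)) := by ring
        _ ≤ (Δ₀ / ε) * ((p * d + (1 - p) * (d / n)) *
              (Lminus + Real.sqrt ((1 - p) / p) * Lpm)) :=
            mul_le_mul_of_nonneg_left key hC.le
        _ = (Δ₀ / ε) * (p * d + (1 - p) * (d / n)) *
              (Lminus + Real.sqrt ((1 - p) / p) * Lpm) := by ring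
  · -- part (ii)
    rw [hN]
    have hne : n ≠ 0 := ne_of_gt hn0
    have harg : (1 - 1 / n) / (1 / n) = n - 1 := by field_simp
    rw [harg]
    have hsqrt : Real.sqrt (n - 1) ≤ Real.sqrt n := Real.sqrt_le_sqrt (by linarith)
    have hinvn : (0:ℝ) < 1 / n := by positivity
    have hdn : (0:ℝ) < d / n := by positivity
    have h1n : (1:ℝ) / n ≤ 1 := by rw [div_le_one hn0]; linarith
    have heq : (1 / n) * d = d / n := by ring
    have hK' : (1 / n) * d + (1 - 1 / n) * (d / n) ≤ 2 * (d / n) := by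
      rw [heq]
      nlinarith [mul_nonneg hinvn.le hdn.le]
    have hK0' : 0 ≤ (1 / n) * d + (1 - 1 / n) * (d / n) := by
      nlinarith [mul_nonneg hinvn.le hd.le,
        mul_nonneg (by linarith : (0:ℝ) ≤ 1 - 1 / n) hdn.le]
    have hL' : Lminus + Real.sqrt (n - 1) * Lpm ≤ Lminus + Real.sqrt n * Lpm := by
      nlinarith [mul_le_mul_of_nonneg_right hsqrt hLpm.le]
    have hL0 : 0 ≤ Lminus + Real.sqrt (n - 1) * Lpm := by
      nlinarith [mul_nonneg (Real.sqrt_nonneg (n - 1)) hLpm.le]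
    have hfin : (d / n) * Real.sqrt n = d / Real.sqrt n := by
      rw [eq_div_iff (ne_of_gt hs), mul_assoc, hss]
      field_simp
    calc (Δ₀ / ε) * ((1 / n) * d + (1 - 1 / n) * (d / n)) *
            (Lminus + Real.sqrt (n - 1) * Lpm)
        ≤ (Δ₀ / ε) * (2 * (d / n)) * (Lminus + Real.sqrt n * Lpm) := by
          apply mul_le_mul (mul_le_mul_of_nonneg_left hK' hC.le) hL' hL0 (by positivity)
      _ = (2 * Δ₀ / ε) * ((d / n) * Lminus + ((d / n) * Real.sqrt n) * Lpm) := by ring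
      _ = (2 * Δ₀ / ε) * ((d / n) * Lminus + (d / Real.sqrt n) * Lpm) := by rw [hfin]
  · -- part (iii)
    rw [hN]
    norm_num
end

section
/- Let d, n, L_−, L_±, Δ₀, ε be positive reals with n ≥ d ≥ 2. Define N(p) := (Δ₀/ε)·(p·d + (1−p))·(L_− + √(((1−p)/p)·((d−1)/(n−1)))·L_±) for p ∈ (0,1]. Then: (i) for all p ∈ (0,1], N(p) ≥ (Δ₀/(2ε))·min{ d·L_−, L_− + (d/√n)·L_± }; (ii) N(1/d) ≤ (4Δ₀/ε)·(L_− + (d/√n)·L_±); and (iii) N(1) = (Δ₀/ε)·d·L_−. -/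
set_option maxHeartbeats 1000000 in
/-- Lemma 10 of the paper, case `n ≥ d`. For the MARINA–PermK
communication complexity `N(p) = (Δ₀/ε)(pd + (1−p))(L₋ + √(((1−p)/p)·((d−1)/(n−1)))·L±)`:
(i) `N(p) ≥ (Δ₀/(2ε))·min{dL₋, L₋ + (d/√n)L±}` for all `p ∈ (0,1]`;
(ii) `N(1/d) ≤ (4Δ₀/ε)(L₋ + (d/√n)L±)`; (iii) `N(1) = (Δ₀/ε)dL₋`. -/
theorem permK_communication_complexity_n_ge_d
    (d n Lminus Lpm Δ₀ ε : ℝ)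
    (hd : 2 ≤ d) (hdn : d ≤ n) (hLminus : 0 < Lminus) (hLpm : 0 < Lpm)
    (hΔ : 0 < Δ₀) (hε : 0 < ε)
    (N : ℝ → ℝ)
    (hN : ∀ p, N p =
      (Δ₀ / ε) * (p * d + (1 - p)) *
        (Lminus + Real.sqrt (((1 - p) / p) * ((d - 1) / (n - 1))) * Lpm)) :
    (∀ p : ℝ, 0 < p → p ≤ 1 →
      (Δ₀ / (2 * ε)) * min (d * Lminus) (Lminus + (d / Real.sqrt n) * Lpm) ≤ N p) ∧
    N (1 / d) ≤ (4 * Δ₀ / ε) * (Lminus + (d / Real.sqrt n) * Lpm) ∧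
    N 1 = (Δ₀ / ε) * d * Lminus := by
  have hn2 : (2:ℝ) ≤ n := le_trans hd hdn
  have hn0 : (0:ℝ) < n := by linarith
  have hn1 : (0:ℝ) < n - 1 := by linarith
  have hd0 : (0:ℝ) < d := by linarith
  have hsn : (0:ℝ) < Real.sqrt n := Real.sqrt_pos.mpr hn0
  have hsn2 : Real.sqrt n ^ 2 = n := Real.sq_sqrt hn0.le
  have hC : (0:ℝ) < Δ₀ / ε := div_pos hΔ hε
  refine ⟨?_, ?_, ?_⟩
  · -- part (i)
    intro p hp hp1
    set s : ℝ := Real.sqrt (((1 - p) / p) * ((d - 1) / (n - 1))) with hs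
    have hs0 : 0 ≤ s := Real.sqrt_nonneg _
    set A : ℝ := p * d + (1 - p) with hA
    have hA1 : 1 ≤ A := by
      have : A = 1 + p * (d - 1) := by ring
      nlinarith
    rw [hN]
    rcases le_or_gt p (1/2) with hph | hph
    · -- small p case
      have hterm0 : 0 ≤ ((1 - p) / p) * ((d - 1) / (n - 1)) := by
        apply mul_nonneg
        · exact div_nonneg (by linarith) hp.le
        · exact div_nonneg (by linarith) hn1.le
      have hAs : A * s = Real.sqrt (A ^ 2 * (((1 - p) / p) * ((d - 1) / (n - 1)))) := by
        rw [Real.sqrt_mul (sq_nonneg A), Real.sqrt_sq (by linarith : (0:ℝ) ≤ A)]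
      have hkey : d / (2 * Real.sqrt n) ≤ A * s := by
        rw [hAs]
        rw [show A ^ 2 * (((1 - p) / p) * ((d - 1) / (n - 1)))
            = (A ^ 2 * (1 - p) * (d - 1)) / (p * (n - 1)) by
          field_simp]
        apply Real.le_sqrt' (by positivity) |>.mpr
        rw [div_pow, mul_pow, hsn2, le_div_iff₀ (by positivity),
          div_mul_eq_mul_div, div_le_iff₀ (by positivity)]
        have hA2 : 1 ≤ A ^ 2 := by nlinarith
        have hsc : d ≤ (1 - p) * (d - 1) * 4 := by
          nlinarith [mul_nonneg (show (0:ℝ) ≤ 1/2 - p by linarith)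
            (show (0:ℝ) ≤ d - 1 by linarith)]
        have hXnn : (0:ℝ) ≤ (1 - p) * (d - 1) * (2 ^ 2 * n) :=
          mul_nonneg (mul_nonneg (by linarith) (by linarith)) (by positivity)
        rcases le_or_gt (p * d) 1 with hpd | hpd
        · -- p*d ≤ 1
          have t1 : d ^ 2 * (p * (n - 1)) ≤ d * n := by
            nlinarith [mul_le_mul_of_nonneg_right hpd (mul_pos hd0 hn1).le,
              mul_pos hd0 hn1]
          have t2 : d * n ≤ (1 - p) * (d - 1) * (2 ^ 2 * n) := by
            nlinarith [mul_le_mul_of_nonneg_right hsc hn0.le]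
          have t3 : (1 - p) * (d - 1) * (2 ^ 2 * n)
              ≤ A ^ 2 * ((1 - p) * (d - 1)) * (2 ^ 2 * n) := by
            nlinarith [mul_le_mul_of_nonneg_right hA2 hXnn]
          nlinarith
        · -- 1 < p*d
          have hApd : p * d ≤ A := by nlinarith
          have hpd0 : (0:ℝ) < p * d := by nlinarith
          have hA2' : (p * d) ^ 2 ≤ A ^ 2 := by nlinarith
          have t1 : d ^ 2 * (p * (n - 1)) ≤ p * d ^ 2 * n := by
            nlinarith [mul_pos hp (mul_pos hd0 hd0)]
          have t2 : p * d ^ 2 * n ≤ (p * d) * (p * d ^ 2 * n) := by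
            nlinarith [mul_le_mul_of_nonneg_right hpd.le
              (mul_pos (mul_pos hp (mul_pos hd0 hd0)) hn0).le]
          have t3 : (p * d) * (p * d ^ 2 * n)
              ≤ (p * d) ^ 2 * ((1 - p) * (d - 1) * (2 ^ 2 * n)) := by
            have h4 : (p * d) * (p * d ^ 2 * n) = (p*d)^2 * (d * n) := by ring
            have h5 : d * n ≤ (1 - p) * (d - 1) * (2 ^ 2 * n) := by
              nlinarith [mul_le_mul_of_nonneg_right hsc hn0.le]
            rw [h4]
            exact mul_le_mul_of_nonneg_left h5 (by positivity)
          have t4 : (p * d) ^ 2 * ((1 - p) * (d - 1) * (2 ^ 2 * n))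
              ≤ A ^ 2 * ((1 - p) * (d - 1) * (2 ^ 2 * n)) :=
            mul_le_mul_of_nonneg_right hA2' hXnn
          nlinarith
      have hmin : min (d * Lminus) (Lminus + (d / Real.sqrt n) * Lpm)
          ≤ Lminus + (d / Real.sqrt n) * Lpm := min_le_right _ _
      have hdsn : (0:ℝ) ≤ d / Real.sqrt n := by positivity
      have h2 : Lminus + (d / (2 * Real.sqrt n)) * Lpm ≤ A * (Lminus + s * Lpm) := by
        have h3 : (d / (2 * Real.sqrt n)) * Lpm ≤ (A * s) * Lpm :=
          mul_le_mul_of_nonneg_right hkey hLpm.le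
        nlinarith [mul_le_mul_of_nonneg_right hA1 hLminus.le]
      have hhalf : d / (2 * Real.sqrt n) = (1/2) * (d / Real.sqrt n) := by ring
      calc (Δ₀ / (2 * ε)) * min (d * Lminus) (Lminus + (d / Real.sqrt n) * Lpm)
          ≤ (Δ₀ / (2 * ε)) * (Lminus + (d / Real.sqrt n) * Lpm) := by
            apply mul_le_mul_of_nonneg_left hmin (by positivity)
        _ ≤ (Δ₀ / ε) * (Lminus + (d / (2 * Real.sqrt n)) * Lpm) := by
            rw [hhalf]
            have : (Δ₀ / (2 * ε)) = (Δ₀ / ε) * (1/2) := by ring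
            rw [this]
            rw [mul_assoc]
            apply mul_le_mul_of_nonneg_left _ hC.le
            nlinarith [mul_nonneg hdsn hLpm.le]
        _ ≤ (Δ₀ / ε) * (A * (Lminus + s * Lpm)) :=
            mul_le_mul_of_nonneg_left h2 hC.le
        _ = Δ₀ / ε * A * (Lminus + s * Lpm) := by ring
    · -- large p case
      have hAd : d / 2 ≤ A := by
        have : A = 1 + p * (d - 1) := by ring
        nlinarith
      have hmin : min (d * Lminus) (Lminus + (d / Real.sqrt n) * Lpm) ≤ d * Lminus :=
        min_le_left _ _
      calc (Δ₀ / (2 * ε)) * min (d * Lminus) (Lminus + (d / Real.sqrt n) * Lpm)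
          ≤ (Δ₀ / (2 * ε)) * (d * Lminus) := mul_le_mul_of_nonneg_left hmin (by positivity)
        _ ≤ (Δ₀ / ε) * (A * Lminus) := by
            have : (Δ₀ / (2 * ε)) * (d * Lminus) = (Δ₀ / ε) * ((d/2) * Lminus) := by ring
            rw [this]
            apply mul_le_mul_of_nonneg_left _ hC.le
            exact mul_le_mul_of_nonneg_right hAd hLminus.le
        _ ≤ Δ₀ / ε * A * (Lminus + s * Lpm) := by
            have hs' : 0 ≤ s * Lpm := mul_nonneg hs0 hLpm.le
            nlinarith [mul_nonneg (mul_nonneg hC.le (by linarith : (0:ℝ) ≤ A)) hs']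
  · -- part (ii)
    rw [hN]
    have hdne : d ≠ 0 := ne_of_gt hd0
    have hAeq : (1/d) * d + (1 - 1/d) = 2 - 1/d := by field_simp; ring
    have hterm : ((1 - 1/d) / (1/d)) * ((d - 1) / (n - 1)) = (d-1)^2 / (n-1) := by
      field_simp
    rw [hAeq, hterm]
    set s := Real.sqrt ((d-1)^2/(n-1)) with hs
    have hs0 : 0 ≤ s := Real.sqrt_nonneg _
    have hsle : s ≤ 2 * d / Real.sqrt n := by
      rw [hs, show (2 * d / Real.sqrt n) = Real.sqrt ((2*d/Real.sqrt n)^2) from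
        (Real.sqrt_sq (by positivity)).symm]
      apply Real.sqrt_le_sqrt
      rw [div_pow, mul_pow, hsn2, div_le_div_iff₀ hn1 hn0]
      nlinarith
    have hA2 : 2 - 1/d ≤ 2 := by
      have : 0 < 1/d := by positivity
      linarith
    have hA0 : 0 < 2 - 1/d := by
      have : 1/d ≤ 1/2 := by
        apply div_le_div_of_nonneg_left (by norm_num) (by norm_num) hd
      linarith
    have hB : Lminus + s * Lpm ≤ 2 * (Lminus + (d / Real.sqrt n) * Lpm) := by
      have : s * Lpm ≤ (2 * d / Real.sqrt n) * Lpm :=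
        mul_le_mul_of_nonneg_right hsle hLpm.le
      have h2 : (2 * d / Real.sqrt n) * Lpm = 2 * ((d / Real.sqrt n) * Lpm) := by ring
      nlinarith
    have hBpos : 0 < Lminus + s * Lpm := by positivity
    calc Δ₀ / ε * (2 - 1/d) * (Lminus + s * Lpm)
        ≤ Δ₀ / ε * 2 * (Lminus + s * Lpm) := by
          apply mul_le_mul_of_nonneg_right _ hBpos.le
          exact mul_le_mul_of_nonneg_left hA2 hC.le
      _ ≤ Δ₀ / ε * 2 * (2 * (Lminus + (d / Real.sqrt n) * Lpm)) := by
          apply mul_le_mul_of_nonneg_left hB (by positivity)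
      _ = (4 * Δ₀ / ε) * (Lminus + (d / Real.sqrt n) * Lpm) := by ring
  · -- part (iii)
    rw [hN]
    norm_num
end

section
/- Let d ≥ n ≥ 1 be integers with d = k·n + r and 0 ≤ r < n. Let π^d be a uniformly random permutation of {1,…,d} and π^n an independent uniformly random permutation of {1,…,n}. For x ∈ ℝ^d, let S(x) be the n-tuple of vectors whose l-th entry for 1 ≤ l ≤ r is x_{π^d_{kn+l}} e_{π^d_{kn+l}} and whose remaining n − r entries are the zero vector, and for i ∈ {1,…,n} define C_i(x) := n·( Σ_{j=k(i−1)+1}^{ki} x_{π^d_j} e_{π^d_j} + (S(x))_{π^n_i} ). Then: (i) each C_i is unbiased, i.e. E[C_i(x)] = x for all x ∈ ℝ^d; (ii) for all a_1,…,a_n ∈ ℝ^d, with ā := (1/n)Σ_{i=1}^n a_i, E[‖(1/n)Σ_{i=1}^n C_i(a_i) − ā‖²] ≤ (1/n)Σ_{i=1}^n ‖a_i − ā‖² (i.e. {C_i}_{i=1}^n ∈ 𝕀𝕍(1), equivalently {C_i} satisfies the AB inequality with A = B = 1). -/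
open Finset

/-- The auxiliary tuple `S(x)` (0-indexed): its `l`-th entry, for `l < r`, is
`x_{π^d(kn+l)} e_{π^d(kn+l)}`, and the remaining `n − r` entries are `0`. -/
noncomputable def permTail (k r : ℕ) {d n : ℕ} (πd : Equiv.Perm (Fin d))
    (x : EuclideanSpace ℝ (Fin d)) (l : Fin n) : EuclideanSpace ℝ (Fin d) :=
  if h : l.1 < r ∧ k * n + l.1 < d then
    EuclideanSpace.single (πd ⟨k * n + l.1, h.2⟩) (x (πd ⟨k * n + l.1, h.2⟩))
  else 0

/-- The general PermK compressor for `d = kn + r` (0-indexed): worker `i` keeps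
coordinates `π^d j` for `k·i ≤ j < k·(i+1)` together with the tail entry `(S(x))_{π^n i}`,
scaled by `n`. -/
noncomputable def permKGen (k r : ℕ) {d n : ℕ} (πd : Equiv.Perm (Fin d))
    (πn : Equiv.Perm (Fin n)) (i : Fin n) (x : EuclideanSpace ℝ (Fin d)) :
    EuclideanSpace ℝ (Fin d) :=
  (n : ℝ) •
    ((∑ j ∈ Finset.univ.filter (fun j : Fin d => k * i.1 ≤ j.1 ∧ j.1 < k * (i.1 + 1)),
        EuclideanSpace.single (πd j) (x (πd j)))
      + permTail k r πd x (πn i))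

lemma card_perm_fiber {d : ℕ} (j m : Fin d) :
    (univ.filter fun π : Equiv.Perm (Fin d) => π j = m).card = (d - 1).factorial := by
  have hd0 : 0 < d := j.pos
  have hconst : ∀ m1 m2 : Fin d,
      (univ.filter fun π : Equiv.Perm (Fin d) => π j = m1).card
        = (univ.filter fun π : Equiv.Perm (Fin d) => π j = m2).card := by
    intro m1 m2
    apply Finset.card_bij' (fun π _ => Equiv.swap m1 m2 * π) (fun π _ => Equiv.swap m1 m2 * π)
    · intro π hπ
      simp only [mem_filter, mem_univ, true_and] at hπ ⊢
      simp [Equiv.Perm.mul_apply, hπ]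
    · intro π hπ
      simp only [mem_filter, mem_univ, true_and] at hπ ⊢
      simp [Equiv.Perm.mul_apply, hπ, Equiv.swap_apply_right]
    · intro π _; simp [← mul_assoc]
    · intro π _; simp [← mul_assoc]
  have hpart : (univ : Finset (Equiv.Perm (Fin d))).card
      = ∑ m' : Fin d, (univ.filter fun π : Equiv.Perm (Fin d) => π j = m').card :=
    Finset.card_eq_sum_card_fiberwise (fun π _ => mem_univ (π j))
  have hsum : (univ : Finset (Equiv.Perm (Fin d))).card
      = d * (univ.filter fun π : Equiv.Perm (Fin d) => π j = m).card := by
    rw [hpart, Finset.sum_congr rfl fun m' _ => hconst m' m]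
    simp [Finset.sum_const, Finset.card_univ, mul_comm]
  have hcard : (univ : Finset (Equiv.Perm (Fin d))).card = d.factorial := by
    simp [Finset.card_univ, Fintype.card_perm]
  have hfac : d * (d - 1).factorial = d.factorial := Nat.mul_factorial_pred hd0.ne'
  exact Nat.eq_of_mul_eq_mul_left hd0 (by omega)

lemma sum_perm_apply_s16 {d : ℕ} {β : Type*} [AddCommMonoid β] (m : Fin d) (f : Fin d → β) :
    ∑ π : Equiv.Perm (Fin d), f (π m) = (d - 1).factorial • ∑ j, f j := by
  have h1 : ∀ π : Equiv.Perm (Fin d), f (π m) = ∑ j, if π m = j then f j else 0 := by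
    intro π; rw [Finset.sum_ite_eq]; simp
  rw [Finset.sum_congr rfl fun π _ => h1 π, Finset.sum_comm, Finset.smul_sum]
  refine Finset.sum_congr rfl fun j _ => ?_
  rw [← Finset.sum_filter, Finset.sum_const, card_perm_fiber m j]

noncomputable def Wfun (k r : ℕ) {d n : ℕ} (hd : d = k * n + r) (hr : r < n) (hk : 0 < k)
    (πd : Equiv.Perm (Fin d)) (πn : Equiv.Perm (Fin n)) (m : Fin d) : Fin n :=
  if h : (πd.symm m).1 < k * n then
    ⟨(πd.symm m).1 / k, by rwa [Nat.div_lt_iff_lt_mul hk, mul_comm]⟩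
  else
    πn.symm ⟨(πd.symm m).1 - k * n, by have h2 := (πd.symm m).2; omega⟩

lemma div_eq_iff_aux {k j i : ℕ} (hk : 0 < k) : j / k = i ↔ k * i ≤ j ∧ j < k * (i + 1) := by
  have h0 := Nat.div_add_mod j k
  have h1 := Nat.mod_lt j hk
  have e1 : (i + 1) * k = k * i + k := by ring
  have e2 : i * k = k * i := Nat.mul_comm i k
  constructor
  · rintro rfl
    rw [Nat.mul_succ]
    omega
  · rintro ⟨hle, hlt⟩
    rw [Nat.mul_succ] at hlt
    have hu := (Nat.div_lt_iff_lt_mul hk).2 (show j < (i + 1) * k by omega)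
    have hl := (Nat.le_div_iff_mul_le hk).2 (show i * k ≤ j by omega)
    omega

lemma permKGen_apply (k r : ℕ) {d n : ℕ} (hd : d = k * n + r) (hr : r < n) (hk : 0 < k)
    (πd : Equiv.Perm (Fin d)) (πn : Equiv.Perm (Fin n)) (i : Fin n)
    (x : EuclideanSpace ℝ (Fin d)) (m : Fin d) :
    permKGen k r πd πn i x m
      = (n : ℝ) * (if Wfun k r hd hr hk πd πn m = i then x m else 0) := by
  set j : Fin d := πd.symm m with hj
  have hjm : πd j = m := πd.apply_symm_apply m
  have hS : (∑ j' ∈ Finset.univ.filter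
        (fun j' : Fin d => k * i.1 ≤ j'.1 ∧ j'.1 < k * (i.1 + 1)),
        EuclideanSpace.single (πd j') (x (πd j'))) m
      = if (k * i.1 ≤ j.1 ∧ j.1 < k * (i.1 + 1)) then x m else 0 := by
    have happ : (∑ j' ∈ Finset.univ.filter
        (fun j' : Fin d => k * i.1 ≤ j'.1 ∧ j'.1 < k * (i.1 + 1)),
        EuclideanSpace.single (πd j') (x (πd j'))) m
        = ∑ j' ∈ Finset.univ.filter
        (fun j' : Fin d => k * i.1 ≤ j'.1 ∧ j'.1 < k * (i.1 + 1)),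
        (EuclideanSpace.single (πd j') (x (πd j'))) m :=
      by rw [WithLp.ofLp_sum, Finset.sum_apply]
    rw [happ]
    have hterm : ∀ j' : Fin d, (EuclideanSpace.single (πd j') (x (πd j'))) m
        = if j' = j then x m else 0 := by
      intro j'
      rw [EuclideanSpace.single_apply]
      by_cases h : j' = j
      · subst h; rw [hjm]; simp
      · rw [if_neg h, if_neg]
        intro hc
        exact h (by rw [← hjm] at hc; exact πd.injective hc.symm)
    rw [Finset.sum_congr rfl fun j' _ => hterm j', Finset.sum_ite_eq']
    simp
  have hsmul : permKGen k r πd πn i x m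
      = (n : ℝ) * ((∑ j' ∈ Finset.univ.filter
          (fun j' : Fin d => k * i.1 ≤ j'.1 ∧ j'.1 < k * (i.1 + 1)),
          EuclideanSpace.single (πd j') (x (πd j'))) m + permTail k r πd x (πn i) m) := by
    rw [permKGen]; rfl
  rw [hsmul, hS]
  congr 1
  by_cases hcase : j.1 < k * n
  · have hT : permTail k r πd x (πn i) m = 0 := by
      rw [permTail]
      split
      · next h =>
        rw [EuclideanSpace.single_apply, if_neg]
        intro hc
        have heq : j = ⟨k * n + (πn i).1, h.2⟩ := πd.injective (by rw [hjm, hc])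
        have hv : j.1 = k * n + (πn i).1 := by rw [heq]
        omega
      · rfl
    rw [hT, add_zero, Wfun, dif_pos hcase]
    by_cases hcond : k * i.1 ≤ j.1 ∧ j.1 < k * (i.1 + 1)
    · rw [if_pos hcond, if_pos]
      exact Fin.ext ((div_eq_iff_aux hk).2 hcond)
    · rw [if_neg hcond, if_neg]
      intro hc
      exact hcond ((div_eq_iff_aux hk).1 (congrArg Fin.val hc))
  · have hblock : ¬(k * i.1 ≤ j.1 ∧ j.1 < k * (i.1 + 1)) := by
      intro h
      have : k * (i.1 + 1) ≤ k * n := Nat.mul_le_mul_left k i.2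
      omega
    rw [if_neg hblock, zero_add, Wfun, dif_neg hcase]
    have hjd : j.1 < d := j.2
    have hlt : j.1 - k * n < n := by omega
    by_cases hc : πn.symm (⟨j.1 - k * n, hlt⟩ : Fin n) = i
    · rw [if_pos hc, permTail]
      have hpi : πn i = (⟨j.1 - k * n, hlt⟩ : Fin n) := by
        rw [← hc, πn.apply_symm_apply]
      have hpiv : (πn i).1 = j.1 - k * n := by rw [hpi]
      have hcond : (πn i).1 < r ∧ k * n + (πn i).1 < d := by omega
      have harg : (⟨k * n + (πn i).1, hcond.2⟩ : Fin d) = j := by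
        apply Fin.ext
        show k * n + (πn i).1 = j.1
        omega
      rw [dif_pos hcond, EuclideanSpace.single_apply, harg, hjm, if_pos rfl]
    · rw [if_neg hc, permTail]
      split
      · next h =>
        rw [EuclideanSpace.single_apply, if_neg]
        intro hcc
        have heq : j = ⟨k * n + (πn i).1, h.2⟩ := πd.injective (by rw [hjm, hcc])
        have hv : j.1 = k * n + (πn i).1 := by rw [heq]
        apply hc
        have hfin : (⟨j.1 - k * n, hlt⟩ : Fin n) = πn i := by
          apply Fin.ext
          show j.1 - k * n = (πn i).1
          omega
        rw [hfin, πn.symm_apply_apply]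
      · rfl

lemma card_W {k r d n : ℕ} (hn : 1 ≤ n) (hd : d = k * n + r) (hr : r < n) (hk : 0 < k)
    (m : Fin d) (i : Fin n) :
    ((univ : Finset (Equiv.Perm (Fin d) × Equiv.Perm (Fin n))).filter
        fun π => Wfun k r hd hr hk π.1 π.2 m = i).card
      = d.factorial * (n - 1).factorial := by
  have hd0 : 0 < d := m.pos
  classical
  set G : ℕ → ℕ := fun t =>
    if t < k * n then (if t / k = i.1 then n.factorial else 0) else (n - 1).factorial with hG
  have hinner : ∀ πd : Equiv.Perm (Fin d),
      (∑ πn : Equiv.Perm (Fin n),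
        if Wfun k r hd hr hk πd πn m = i then 1 else 0) = G (πd.symm m).1 := by
    intro πd
    by_cases h : (πd.symm m).1 < k * n
    · have hdiv : (πd.symm m).1 / k < n := by rwa [Nat.div_lt_iff_lt_mul hk, mul_comm]
      have hW : ∀ πn : Equiv.Perm (Fin n), Wfun k r hd hr hk πd πn m
          = ⟨(πd.symm m).1 / k, hdiv⟩ := by
        intro πn; rw [Wfun, dif_pos h]
      simp only [hW, hG, if_pos h]
      by_cases hcond : (πd.symm m).1 / k = i.1
      · rw [if_pos hcond]
        have hfi : (⟨(πd.symm m).1 / k, hdiv⟩ : Fin n) = i := Fin.ext hcond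
        simp [hfi, Finset.card_univ, Fintype.card_perm]
      · rw [if_neg hcond]
        have hfi : ¬((⟨(πd.symm m).1 / k, hdiv⟩ : Fin n) = i) :=
          fun hc => hcond (congrArg Fin.val hc)
        simp [hfi]
    · have hW : ∀ πn : Equiv.Perm (Fin n), Wfun k r hd hr hk πd πn m
          = πn.symm ⟨(πd.symm m).1 - k * n, by have h2 := (πd.symm m).2; omega⟩ := by
        intro πn; rw [Wfun, dif_neg h]
      simp only [hW, hG, if_neg h]
      have hiff : ∀ πn : Equiv.Perm (Fin n),
          (πn.symm ⟨(πd.symm m).1 - k * n, by have h2 := (πd.symm m).2; omega⟩ = i)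
          ↔ (πn i = ⟨(πd.symm m).1 - k * n, by have h2 := (πd.symm m).2; omega⟩) := by
        intro πn
        constructor
        · intro hc; rw [← hc, πn.apply_symm_apply]
        · intro hc; rw [← hc, πn.symm_apply_apply]
      rw [Finset.sum_congr rfl fun πn _ => by rw [if_congr (hiff πn) rfl rfl]]
      rw [← Finset.card_filter]
      exact card_perm_fiber i _
  have hsplit : ((univ : Finset (Equiv.Perm (Fin d) × Equiv.Perm (Fin n))).filter
        fun π => Wfun k r hd hr hk π.1 π.2 m = i).card
      = ∑ πd : Equiv.Perm (Fin d), G (πd.symm m).1 := by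
    rw [Finset.card_filter, ← Finset.univ_product_univ, Finset.sum_product]
    exact Finset.sum_congr rfl fun πd _ => hinner πd
  rw [hsplit]
  have hsymm : (∑ πd : Equiv.Perm (Fin d), G (πd.symm m).1)
      = ∑ πd : Equiv.Perm (Fin d), G (πd m).1 :=
    Equiv.sum_comp (Equiv.inv (Equiv.Perm (Fin d))) (fun π => G (π m).1)
  rw [hsymm, sum_perm_apply_s16 m (fun j => G j.1)]
  -- now compute ∑ j : Fin d, G j.1
  have hrange : (∑ j : Fin d, G j.1) = ∑ t ∈ Finset.range d, G t :=
    Fin.sum_univ_eq_sum_range G d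
  have hsum : (∑ t ∈ Finset.range d, G t) = n.factorial * k + (n - 1).factorial * r := by
    have h1 : Finset.range d = Finset.Ico 0 (k * n + r) := by rw [hd, Finset.range_eq_Ico]
    rw [h1, ← Finset.sum_Ico_consecutive G (Nat.zero_le (k * n)) (Nat.le_add_right _ _)]
    have h2 : (∑ t ∈ Finset.Ico (k * n) (k * n + r), G t)
        = (n - 1).factorial * r := by
      rw [Finset.sum_congr rfl (fun t ht => ?_), Finset.sum_const, Nat.card_Ico]
      · rw [Nat.add_sub_cancel_left, smul_eq_mul, mul_comm]
      · rw [Finset.mem_Ico] at ht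
        rw [hG]; simp only
        rw [if_neg (by omega)]
    have h3 : (∑ t ∈ Finset.Ico 0 (k * n), G t) = n.factorial * k := by
      rw [← Finset.range_eq_Ico]
      have h4 : ∀ t ∈ Finset.range (k * n), G t = if t / k = i.1 then n.factorial else 0 := by
        intro t ht
        rw [Finset.mem_range] at ht
        rw [hG]; simp only
        rw [if_pos ht]
      rw [Finset.sum_congr rfl h4, ← Finset.sum_filter]
      have h5 : (Finset.range (k * n)).filter (fun t => t / k = i.1)
          = Finset.Ico (k * i.1) (k * i.1 + k) := by
        ext t
        rw [Finset.mem_filter, Finset.mem_range, Finset.mem_Ico, and_comm]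
        have hki : k * (i.1 + 1) ≤ k * n := Nat.mul_le_mul_left k i.2
        have hmul : k * (i.1 + 1) = k * i.1 + k := by ring
        constructor
        · rintro ⟨hdiv, _⟩
          have := (div_eq_iff_aux hk).1 hdiv
          omega
        · rintro ⟨h1', h2'⟩
          have hdiv := (div_eq_iff_aux hk).2 (by omega : k * i.1 ≤ t ∧ t < k * (i.1 + 1))
          exact ⟨hdiv, by omega⟩
      rw [h5, Finset.sum_const, Nat.card_Ico]
      simp [mul_comm]
    rw [h2, h3]
  rw [hrange, hsum, smul_eq_mul]
  have e1 : n.factorial = n * (n - 1).factorial := (Nat.mul_factorial_pred (show n ≠ 0 by omega)).symm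
  have e2 : d.factorial = d * (d - 1).factorial := (Nat.mul_factorial_pred hd0.ne').symm
  rw [e1, e2, hd]
  ring

/-- general PermK, `d ≥ n`, `d = kn + r`: the compressors are unbiased
and belong to `𝕀𝕍(1)`; expectations are over the pair of independent uniformly random
permutations `(π^d, π^n)`. -/
theorem permKGen_unbiased_and_inputVariance_one
    {k r d n : ℕ} (hn : 1 ≤ n) (hnd : n ≤ d) (hd : d = k * n + r) (hr : r < n) :
    (∀ (i : Fin n) (x : EuclideanSpace ℝ (Fin d)),
      finExp (fun π : Equiv.Perm (Fin d) × Equiv.Perm (Fin n) =>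
        permKGen k r π.1 π.2 i x) = x) ∧
    (∀ a : Fin n → EuclideanSpace ℝ (Fin d),
      finExp (fun π : Equiv.Perm (Fin d) × Equiv.Perm (Fin n) =>
          ‖(n : ℝ)⁻¹ • ∑ i, permKGen k r π.1 π.2 i (a i) - (n : ℝ)⁻¹ • ∑ i, a i‖ ^ 2) ≤
        (n : ℝ)⁻¹ * ∑ i, ‖a i - (n : ℝ)⁻¹ • ∑ j, a j‖ ^ 2) := by
  have hk : 0 < k := by
    rcases Nat.eq_zero_or_pos k with h | h
    · subst h; omega
    · exact h
  have hd0 : 0 < d := lt_of_lt_of_le hn hnd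
  have hn0 : (n : ℝ) ≠ 0 := Nat.cast_ne_zero.mpr (by omega)
  have hA0 : ((d.factorial * (n - 1).factorial : ℕ) : ℝ) ≠ 0 :=
    Nat.cast_ne_zero.mpr (Nat.mul_ne_zero d.factorial_ne_zero (n - 1).factorial_ne_zero)
  have hcard : (Fintype.card (Equiv.Perm (Fin d) × Equiv.Perm (Fin n)) : ℝ)
      = (n : ℝ) * ((d.factorial * (n - 1).factorial : ℕ) : ℝ) := by
    rw [Fintype.card_prod, Fintype.card_perm, Fintype.card_perm, Fintype.card_fin,
      Fintype.card_fin]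
    have h : d.factorial * n.factorial = n * (d.factorial * (n - 1).factorial) := by
      rw [← Nat.mul_factorial_pred (show n ≠ 0 by omega)]; ring
    rw [h]
    push_cast
    ring
  have hAc : (Fintype.card (Equiv.Perm (Fin d) × Equiv.Perm (Fin n)) : ℝ)⁻¹
      * ((d.factorial * (n - 1).factorial : ℕ) : ℝ) = (n : ℝ)⁻¹ := by
    rw [hcard, mul_inv, mul_assoc, inv_mul_cancel₀ hA0, mul_one]
  have hnorm : ∀ v : EuclideanSpace ℝ (Fin d), ‖v‖ ^ 2 = ∑ m, (v m) ^ 2 := by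
    intro v
    rw [EuclideanSpace.norm_eq, Real.sq_sqrt (by positivity)]
    exact Finset.sum_congr rfl fun m _ => by rw [Real.norm_eq_abs, sq_abs]
  constructor
  · -- unbiasedness
    intro i x
    rw [finExp]
    ext m
    rw [PiLp.smul_apply, WithLp.ofLp_sum, Finset.sum_apply, smul_eq_mul]
    rw [Finset.sum_congr rfl fun π _ => permKGen_apply k r hd hr hk π.1 π.2 i x m]
    rw [← Finset.mul_sum, ← Finset.sum_filter, Finset.sum_const,
      card_W hn hd hr hk m i, nsmul_eq_mul, hcard]
    field_simp
  · -- variance bound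
    intro a
    have hA : ∀ (π : Equiv.Perm (Fin d) × Equiv.Perm (Fin n)) (m : Fin d),
        ((n : ℝ)⁻¹ • ∑ i, permKGen k r π.1 π.2 i (a i)) m
          = a (Wfun k r hd hr hk π.1 π.2 m) m := by
      intro π m
      rw [PiLp.smul_apply, WithLp.ofLp_sum, Finset.sum_apply, smul_eq_mul]
      rw [Finset.sum_congr rfl fun i _ => permKGen_apply k r hd hr hk π.1 π.2 i (a i) m]
      rw [← Finset.mul_sum, ← mul_assoc, inv_mul_cancel₀ hn0, one_mul,
        Finset.sum_ite_eq]
      simp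
    have hv : ∀ (π : Equiv.Perm (Fin d) × Equiv.Perm (Fin n)) (m : Fin d),
        ((n : ℝ)⁻¹ • ∑ i, permKGen k r π.1 π.2 i (a i) - (n : ℝ)⁻¹ • ∑ i, a i) m
          = a (Wfun k r hd hr hk π.1 π.2 m) m - ((n : ℝ)⁻¹ • ∑ j, a j) m := by
      intro π m
      rw [PiLp.sub_apply, hA]
    have hsq : ∀ π : Equiv.Perm (Fin d) × Equiv.Perm (Fin n),
        ‖(n : ℝ)⁻¹ • ∑ i, permKGen k r π.1 π.2 i (a i) - (n : ℝ)⁻¹ • ∑ i, a i‖ ^ 2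
          = ∑ m, (a (Wfun k r hd hr hk π.1 π.2 m) m - ((n : ℝ)⁻¹ • ∑ j, a j) m) ^ 2 := by
      intro π
      rw [hnorm]
      exact Finset.sum_congr rfl fun m _ => by rw [hv π m]
    rw [finExp, smul_eq_mul, Finset.sum_congr rfl fun π _ => hsq π, Finset.sum_comm]
    have hfiber : ∀ m : Fin d,
        (∑ π : Equiv.Perm (Fin d) × Equiv.Perm (Fin n),
          (a (Wfun k r hd hr hk π.1 π.2 m) m - ((n : ℝ)⁻¹ • ∑ j, a j) m) ^ 2)
        = ((d.factorial * (n - 1).factorial : ℕ) : ℝ)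
            * ∑ i, (a i m - ((n : ℝ)⁻¹ • ∑ j, a j) m) ^ 2 := by
      intro m
      have h1 : ∀ π : Equiv.Perm (Fin d) × Equiv.Perm (Fin n),
          (a (Wfun k r hd hr hk π.1 π.2 m) m - ((n : ℝ)⁻¹ • ∑ j, a j) m) ^ 2
          = ∑ i, if Wfun k r hd hr hk π.1 π.2 m = i
              then (a i m - ((n : ℝ)⁻¹ • ∑ j, a j) m) ^ 2 else 0 := by
        intro π
        rw [Finset.sum_ite_eq]
        simp
      rw [Finset.sum_congr rfl fun π _ => h1 π, Finset.sum_comm, Finset.mul_sum]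
      exact Finset.sum_congr rfl fun i _ => by
        rw [← Finset.sum_filter, Finset.sum_const, card_W hn hd hr hk m i, nsmul_eq_mul]
    rw [Finset.sum_congr rfl fun m _ => hfiber m, ← Finset.mul_sum, ← mul_assoc, hAc]
    rw [Finset.sum_comm]
    apply le_of_eq
    congr 1
    refine Finset.sum_congr rfl fun i _ => ?_
    rw [hnorm]
    exact Finset.sum_congr rfl fun m _ => by rw [PiLp.sub_apply]
end

section
/- Let P_1,…,P_m be a partition of {1,…,d} into m nonempty subsets with m ≤ n, n > 1, and write n = m·q + r with q ≥ 1 and 0 ≤ r < m. Define d×d matrices A_1,…,A_n by: A_i := 0 for i > m·q, and for each block index i ∈ {1,…,m} and each l ∈ {1,…,q}, A_{(i−1)q+l} := (n/q)·Diag(P_i), where Diag(S) is the diagonal matrix whose j-th diagonal entry is 1 if j ∈ S and 0 otherwise. Let π = (π_1,…,π_n) be a uniformly random permutation of {1,…,n} and define C_i(x) := A_{π_i} x for x ∈ ℝ^d. Then: (i) each C_i is unbiased; and (ii) for all a_1,…,a_n ∈ ℝ^d, E[‖(1/n)Σ_{i=1}^n C_i(a_i) − (1/n)Σ_{i=1}^n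 a_i‖²] ≤ A·(1/n)Σ_{i=1}^n ‖a_i‖² − A·‖(1/n)Σ_{i=1}^n a_i‖² with A = 1 − n(q−1)/((n−1)q) (i.e. the block permutation compressor satisfies the AB inequality with A = B = 1 − n(q−1)/((n−1)q)). -/
open Finset

/-- The matrix `A_i` of the block permutation compressor, applied to `x` (0-indexed):
`A_i = (n/q)·Diag(P_{i/q})` for `i < m·q` and `A_i = 0` otherwise, so that
`A_i x = (n/q)·∑_{l ∈ P_{i/q}} x_l e_l`. -/
noncomputable def blockMat (q : ℕ) {d m : ℕ} (P : Fin m → Finset (Fin d)) (n : ℕ)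
    (i : Fin n) (x : EuclideanSpace ℝ (Fin d)) : EuclideanSpace ℝ (Fin d) :=
  if h : i.1 / q < m then
    ((n : ℝ) / q) • ∑ l ∈ P ⟨i.1 / q, h⟩, EuclideanSpace.single l (x l)
  else 0

/-- The block permutation compressor: `C_i(x) := A_{π i} x`. -/
noncomputable def blockPermK (q : ℕ) {d m n : ℕ} (P : Fin m → Finset (Fin d))
    (π : Equiv.Perm (Fin n)) (i : Fin n) (x : EuclideanSpace ℝ (Fin d)) :
    EuclideanSpace ℝ (Fin d) :=
  blockMat q P n (π i) x

lemma div_eq_iff' (k q j : ℕ) (hq : 1 ≤ q) : k / q = j ↔ (j*q ≤ k ∧ k < j*q + q) := by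
  constructor
  · rintro rfl
    have h := Nat.div_add_mod k q
    have h2 := Nat.mod_lt k hq
    have h3 : q * (k/q) = (k/q) * q := mul_comm _ _
    omega
  · rintro ⟨h1, h2⟩
    have h3 : k / q < j + 1 := (Nat.div_lt_iff_lt_mul hq).2 (by rw [add_one_mul]; omega)
    have h4 : j ≤ k / q := (Nat.le_div_iff_mul_le hq).2 (by omega)
    omega

lemma sum_perm_zero {M : Type*} [AddCommMonoid M] {n : ℕ} (f : Fin (n+1) → M) :
    ∑ π : Equiv.Perm (Fin (n+1)), f (π 0) = n.factorial • ∑ k, f k := by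
  rw [← Fintype.sum_equiv Equiv.Perm.decomposeFin.symm
      (fun pe : Fin (n+1) × Equiv.Perm (Fin n) => f pe.1)
      (fun π => f (π 0))
      (fun pe => by
        show f pe.1 = f (Equiv.Perm.decomposeFin.symm pe 0)
        rw [show pe = (pe.1, pe.2) from rfl, Equiv.Perm.decomposeFin_symm_apply_zero])]
  rw [Fintype.sum_prod_type, Finset.smul_sum]
  simp [Finset.sum_const, Fintype.card_perm, Fintype.card_fin]

lemma sum_perm_apply_s18 {M : Type*} [AddCommMonoid M] {n : ℕ} (i : Fin (n+1))
    (f : Fin (n+1) → M) :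
    ∑ π : Equiv.Perm (Fin (n+1)), f (π i) = n.factorial • ∑ k, f k := by
  rw [← sum_perm_zero f]
  exact Fintype.sum_bijective (· * Equiv.swap 0 i) (Group.mulRight_bijective _)
    _ _ (fun π => by simp [Equiv.Perm.mul_apply])

lemma sum_swap_succ {M : Type*} [AddCommGroup M] {n : ℕ} (p : Fin (n+1))
    (g : Fin (n+1) → M) :
    ∑ j : Fin n, g (Equiv.swap 0 p j.succ) = ∑ k ∈ Finset.univ.erase p, g k := by
  have h1 : ∑ k : Fin (n+1), g (Equiv.swap 0 p k) = ∑ k : Fin (n+1), g k :=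
    Equiv.sum_comp (Equiv.swap 0 p) g
  rw [Fin.sum_univ_succ, Equiv.swap_apply_left] at h1
  rw [Finset.sum_erase_eq_sub (Finset.mem_univ p), ← h1]
  abel

lemma sum_perm_pair {M : Type*} [AddCommGroup M] {n : ℕ} (i i' : Fin (n+2))
    (hii : i ≠ i') (g : Fin (n+2) → Fin (n+2) → M) :
    ∑ π : Equiv.Perm (Fin (n+2)), g (π i) (π i')
      = n.factorial • ∑ p, ∑ k ∈ Finset.univ.erase p, g p k := by
  -- reduce to i = 0, i' = 1
  set σ : Equiv.Perm (Fin (n+2)) := Equiv.swap 0 i with hσ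
  have hj0 : σ i' ≠ 0 := by
    intro h
    apply hii
    have : i' = σ 0 := by rw [← h, Equiv.swap_apply_self]
    rw [this, hσ, Equiv.swap_apply_left]
  set τ : Equiv.Perm (Fin (n+2)) := σ * Equiv.swap 1 (σ i') with hτ
  have hτ0 : τ 0 = i := by
    rw [hτ, Equiv.Perm.mul_apply, Equiv.swap_apply_of_ne_of_ne (by norm_num) (Ne.symm hj0),
      hσ, Equiv.swap_apply_left]
  have hτ1 : τ 1 = i' := by
    rw [hτ, Equiv.Perm.mul_apply, Equiv.swap_apply_left, hσ, Equiv.swap_apply_self]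
  have step1 : ∑ π : Equiv.Perm (Fin (n+2)), g (π i) (π i')
      = ∑ π : Equiv.Perm (Fin (n+2)), g (π 0) (π 1) := by
    refine Fintype.sum_bijective (· * τ) (Group.mulRight_bijective _) _ _ ?_
    intro π
    simp only [Equiv.Perm.mul_apply, hτ0, hτ1]
  rw [step1]
  -- decompose
  have step2 : ∑ π : Equiv.Perm (Fin (n+2)), g (π 0) (π 1)
      = ∑ pe : Fin (n+2) × Equiv.Perm (Fin (n+1)),
          g pe.1 (Equiv.swap 0 pe.1 ((pe.2 0).succ)) := by
    refine (Fintype.sum_equiv Equiv.Perm.decomposeFin.symm _ _ ?_).symm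
    intro pe
    show g pe.1 (Equiv.swap 0 pe.1 ((pe.2 0).succ))
      = g (Equiv.Perm.decomposeFin.symm pe 0) (Equiv.Perm.decomposeFin.symm pe 1)
    rw [show pe = (pe.1, pe.2) from rfl]
    rw [Equiv.Perm.decomposeFin_symm_apply_zero,
      show (1 : Fin (n+2)) = (0 : Fin (n+1)).succ from rfl,
      Equiv.Perm.decomposeFin_symm_apply_succ]
  rw [step2, Fintype.sum_prod_type, Finset.smul_sum]
  refine Finset.sum_congr rfl fun p _ => ?_
  rw [sum_perm_apply_s18 (0 : Fin (n+1)) (fun j => g p (Equiv.swap 0 p j.succ)),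
    sum_swap_succ p (g p)]

lemma scalar_core {n'' q : ℕ} (hq : 1 ≤ q) (c : Finset (Fin (n''+2)))
    (hc : c.card = q) (x : Fin (n''+2) → ℝ) :
    ∑ π : Equiv.Perm (Fin (n''+2)),
        ((q:ℝ)⁻¹ * (∑ i, (if π i ∈ c then (1:ℝ) else 0) * x i)
          - ((n''+2 : ℝ))⁻¹ * ∑ i, x i) ^ 2
    = ((n''+2).factorial : ℝ) *
        ((((n''+2:ℝ)) - q) / ((((n''+2:ℝ)) - 1) * q)) *
        ((((n''+2:ℝ)))⁻¹ * (∑ i, x i * x i) - ((((n''+2:ℝ)))⁻¹ * ∑ i, x i)^2) := by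
  set χ : Fin (n''+2) → ℝ := fun k => if k ∈ c then 1 else 0 with hχ
  have hχsum : ∑ k, χ k = (q:ℝ) := by
    simp only [hχ, Finset.sum_ite_mem, Finset.univ_inter, Finset.sum_const, hc]
    simp
  have hχsq : ∀ k, χ k * χ k = χ k := by
    intro k; simp only [hχ]; split <;> simp
  have h1 : ∀ i : Fin (n''+2), ∑ π : Equiv.Perm (Fin (n''+2)), χ (π i)
      = ((n''+1).factorial : ℝ) * q := by
    intro i
    rw [sum_perm_apply_s18 i χ, hχsum, nsmul_eq_mul]
  have h2 : ∀ i i' : Fin (n''+2), i ≠ i' →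
      ∑ π : Equiv.Perm (Fin (n''+2)), χ (π i) * χ (π i')
      = (n''.factorial : ℝ) * ((q:ℝ) * q - q) := by
    intro i i' hii
    rw [sum_perm_pair i i' hii (fun a b => χ a * χ b), nsmul_eq_mul]
    congr 1
    have e1 : ∀ p : Fin (n''+2), ∑ k ∈ Finset.univ.erase p, χ p * χ k
        = χ p * (q:ℝ) - χ p := by
      intro p
      rw [← Finset.mul_sum, Finset.sum_erase_eq_sub (Finset.mem_univ p), hχsum,
        mul_sub, hχsq]
    rw [Finset.sum_congr rfl fun p _ => e1 p, Finset.sum_sub_distrib,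
      ← Finset.sum_mul, hχsum]
  -- notation
  set S : ℝ := ∑ i, x i with hS
  set T : ℝ := ∑ i, x i * x i with hT
  set I : Equiv.Perm (Fin (n''+2)) → ℝ := fun π => ∑ i, χ (π i) * x i with hI
  have hSI : ∑ π : Equiv.Perm (Fin (n''+2)), I π = ((n''+1).factorial : ℝ) * q * S := by
    rw [hI, hS]
    rw [Finset.sum_comm]
    rw [Finset.mul_sum]
    refine Finset.sum_congr rfl fun i _ => ?_
    rw [← Finset.sum_mul, h1 i]
  have hSII : ∑ π : Equiv.Perm (Fin (n''+2)), I π * I π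
      = ((n''+1).factorial : ℝ) * q * T
        + (n''.factorial : ℝ) * ((q:ℝ) * q - q) * (S * S - T) := by
    have e0 : ∀ π : Equiv.Perm (Fin (n''+2)), I π * I π
        = ∑ i, ∑ i', (χ (π i) * χ (π i')) * (x i * x i') := by
      intro π
      rw [hI, Finset.sum_mul_sum]
      refine Finset.sum_congr rfl fun i _ => Finset.sum_congr rfl fun i' _ => by ring
    rw [Finset.sum_congr rfl fun π _ => e0 π]
    rw [Finset.sum_comm]
    have e1 : ∀ i : Fin (n''+2),
        ∑ π : Equiv.Perm (Fin (n''+2)), ∑ i', (χ (π i) * χ (π i')) * (x i * x i')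
        = ((n''+1).factorial : ℝ) * q * (x i * x i)
          + (n''.factorial : ℝ) * ((q:ℝ) * q - q) * (x i * (S - x i)) := by
      intro i
      rw [Finset.sum_comm]
      rw [← Finset.add_sum_erase (f := fun i' =>
        ∑ π : Equiv.Perm (Fin (n''+2)), (χ (π i) * χ (π i')) * (x i * x i'))
        Finset.univ (Finset.mem_univ i)]
      congr 1
      · rw [← Finset.sum_mul]
        rw [Finset.sum_congr rfl fun π _ => hχsq (π i), h1 i]
      · have e2 : ∀ i' ∈ Finset.univ.erase i,
            ∑ π : Equiv.Perm (Fin (n''+2)), (χ (π i) * χ (π i')) * (x i * x i')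
            = (n''.factorial : ℝ) * ((q:ℝ) * q - q) * (x i * x i') := by
          intro i' hi'
          rw [← Finset.sum_mul, h2 i i' (Ne.symm (Finset.mem_erase.1 hi').1)]
        rw [Finset.sum_congr rfl e2, ← Finset.mul_sum, ← Finset.mul_sum,
          Finset.sum_erase_eq_sub (Finset.mem_univ i), ← hS]
    rw [Finset.sum_congr rfl fun i _ => e1 i, Finset.sum_add_distrib,
      ← Finset.mul_sum, ← Finset.mul_sum, ← hT]
    congr 1
    rw [Finset.sum_congr rfl fun i (_ : i ∈ Finset.univ) => (mul_sub (x i) S (x i) : x i * (S - x i) = x i * S - x i * x i),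
      Finset.sum_sub_distrib, ← Finset.sum_mul, ← hS, ← hT]
  -- final assembly
  show ∑ π : Equiv.Perm (Fin (n''+2)),
      ((q:ℝ)⁻¹ * I π - ((n''+2 : ℝ))⁻¹ * S) ^ 2 = _
  have hq0 : (q:ℝ) ≠ 0 := by positivity
  have hn0' : ((n''+2:ℕ):ℝ) ≠ 0 := by positivity
  have hn0 : ((n'':ℝ) + 2) ≠ 0 := by positivity
  have hn1 : ((n'':ℝ) + 2) - 1 ≠ 0 := by
    have : ((n'':ℝ) + 2) - 1 = (n'':ℝ) + 1 := by ring
    rw [this]; positivity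
  have hF0 : ((n''.factorial : ℝ)) ≠ 0 := by positivity
  have f1 : ((n''+1).factorial : ℝ) = ((n'':ℝ) + 1) * n''.factorial := by
    rw [Nat.factorial_succ]; push_cast; ring
  have f2 : ((n''+2).factorial : ℝ)
      = ((n'':ℝ) + 2) * (((n'':ℝ) + 1) * n''.factorial) := by
    rw [show n''+2 = (n''+1)+1 from rfl, Nat.factorial_succ, Nat.factorial_succ]
    push_cast; ring
  have expand : ∀ π : Equiv.Perm (Fin (n''+2)),
      ((q:ℝ)⁻¹ * I π - ((n''+2 : ℝ))⁻¹ * S) ^ 2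
      = (q:ℝ)⁻¹ * (q:ℝ)⁻¹ * (I π * I π)
        - 2 * (q:ℝ)⁻¹ * ((n''+2 : ℝ))⁻¹ * S * I π
        + ((n''+2 : ℝ))⁻¹ * ((n''+2 : ℝ))⁻¹ * (S * S) := by
    intro π; ring
  rw [Finset.sum_congr rfl fun π _ => expand π, Finset.sum_add_distrib,
    Finset.sum_sub_distrib, ← Finset.mul_sum, ← Finset.mul_sum,
    Finset.sum_const, hSI, hSII, nsmul_eq_mul]
  simp only [Finset.card_univ, Fintype.card_perm, Fintype.card_fin]
  rw [f1, f2]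
  field_simp
  ring

lemma blockMat_apply {q d m n : ℕ} (hq : 1 ≤ q) (P : Fin m → Finset (Fin d))
    (hPdisj : ∀ i j, i ≠ j → Disjoint (P i) (P j))
    (k : Fin n) (x : EuclideanSpace ℝ (Fin d)) (l : Fin d)
    {j : Fin m} (hjl : l ∈ P j) :
    blockMat q P n k x l
      = (if k.1 / q = j.1 then ((n:ℝ)/q) else 0) * x l := by
  unfold blockMat
  split
  · next h =>
    have happ : (((n : ℝ) / q) • ∑ l' ∈ P ⟨k.1/q, h⟩, EuclideanSpace.single l' (x l')) l
        = ((n:ℝ)/q) * ∑ l' ∈ P ⟨k.1/q, h⟩, (if l = l' then x l' else 0) := by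
      rw [PiLp.smul_apply, WithLp.ofLp_sum, Finset.sum_apply l (P ⟨k.1/q, h⟩)
        (fun l' => (EuclideanSpace.single l' (x l')).ofLp)]
      simp only [EuclideanSpace.single_apply, smul_eq_mul]
    rw [happ, Finset.sum_ite_eq (P ⟨k.1/q, h⟩) l (fun l' => x l')]
    by_cases hkj : k.1 / q = j.1
    · have : (⟨k.1/q, h⟩ : Fin m) = j := Fin.ext hkj
      rw [this, if_pos hjl, if_pos hkj, mul_comm]
    · have hne : (⟨k.1/q, h⟩ : Fin m) ≠ j := fun hEq => hkj (congrArg Fin.val hEq)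
      have : l ∉ P ⟨k.1/q, h⟩ := fun hmem =>
        (Finset.disjoint_left.1 (hPdisj _ _ hne) hmem) hjl
      rw [if_neg this, if_neg hkj, mul_zero, zero_mul]
  · next h =>
    have hkj : k.1 / q ≠ j.1 := fun hEq => h (hEq ▸ j.2)
    rw [if_neg hkj, zero_mul]
    rfl

lemma card_block_s18 {q m n : ℕ} (hq : 1 ≤ q) (hsub : m * q ≤ n) {j : ℕ} (hj : j < m) :
    (Finset.univ.filter (fun k : Fin n => k.1 / q = j)).card = q := by
  have hlt : ∀ t : Fin q, j * q + t.1 < n := by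
    intro t
    calc j * q + t.1 < j * q + q := by omega
    _ = (j+1) * q := by ring
    _ ≤ m * q := Nat.mul_le_mul_right q hj
    _ ≤ n := hsub
  have himg : Finset.univ.filter (fun k : Fin n => k.1 / q = j)
      = Finset.image (fun t : Fin q => (⟨j * q + t.1, hlt t⟩ : Fin n)) Finset.univ := by
    ext k
    simp only [Finset.mem_filter, Finset.mem_univ, true_and, Finset.mem_image]
    constructor
    · intro hk
      rw [div_eq_iff' _ _ _ hq] at hk
      exact ⟨⟨k.1 - j*q, by omega⟩, by apply Fin.ext; simp; omega⟩
    · rintro ⟨t, rfl⟩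
      rw [div_eq_iff' _ _ _ hq, Fin.val_mk]
      exact ⟨by omega, by have := t.2; omega⟩
  rw [himg, Finset.card_image_of_injective _ (fun t t' h => by
    have : j * q + t.1 = j * q + t'.1 := congrArg Fin.val h
    exact Fin.ext (by omega)), Finset.card_univ, Fintype.card_fin]

/-- block permutation compressor. For a partition `P₁,…,Pₘ` of
`{1,…,d}` into nonempty blocks, `n = m·q + r`, the compressors `C_i(x) = A_{π i}x` are
unbiased and satisfy the AB inequality with `A = B = 1 − n(q−1)/((n−1)q)`. -/
theorem blockPermK_unbiased_and_AB
    {q r d m n : ℕ} (hq : 1 ≤ q) (hm : m ≤ n) (hn1 : 1 < n) (hn : n = m * q + r)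
    (hr : r < m)
    (P : Fin m → Finset (Fin d))
    (hPne : ∀ i, (P i).Nonempty)
    (hPdisj : ∀ i j, i ≠ j → Disjoint (P i) (P j))
    (hPcover : ∀ l : Fin d, ∃ i, l ∈ P i) :
    (∀ (i : Fin n) (x : EuclideanSpace ℝ (Fin d)),
      finExp (fun π : Equiv.Perm (Fin n) => blockPermK q P π i x) = x) ∧
    (∀ a : Fin n → EuclideanSpace ℝ (Fin d),
      finExp (fun π : Equiv.Perm (Fin n) =>
          ‖(n : ℝ)⁻¹ • ∑ i, blockPermK q P π i (a i) - (n : ℝ)⁻¹ • ∑ i, a i‖ ^ 2) ≤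
        (1 - (n : ℝ) * ((q : ℝ) - 1) / (((n : ℝ) - 1) * q)) *
            ((n : ℝ)⁻¹ * ∑ i, ‖a i‖ ^ 2)
          - (1 - (n : ℝ) * ((q : ℝ) - 1) / (((n : ℝ) - 1) * q)) *
            ‖(n : ℝ)⁻¹ • ∑ i, a i‖ ^ 2) := by
  obtain ⟨n'', rfl⟩ : ∃ k, n = k + 2 := ⟨n - 2, by omega⟩
  have hm0 : 1 ≤ m := by omega
  have hsub : m * q ≤ n'' + 2 := by omega
  have hq0 : (q:ℝ) ≠ 0 := by positivity
  have hn0' : ((n''+2:ℕ):ℝ) ≠ 0 := by positivity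
  have hcast : ((n''+2:ℕ):ℝ) = (n'':ℝ) + 2 := by push_cast; ring
  have hcard : Fintype.card (Equiv.Perm (Fin (n''+2))) = (n''+2).factorial := by
    rw [Fintype.card_perm, Fintype.card_fin]
  have f2 : ((n''+2).factorial : ℝ) = ((n'':ℝ)+2) * ((n''+1).factorial : ℝ) := by
    rw [show n''+2 = (n''+1)+1 from rfl, Nat.factorial_succ]; push_cast; ring
  have hF2 : ((n''+2).factorial : ℝ) ≠ 0 := by positivity
  -- block index of each coordinate
  set jl : Fin d → Fin m := fun l => (hPcover l).choose with hjl_def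
  have hjl : ∀ l, l ∈ P (jl l) := fun l => (hPcover l).choose_spec
  set cset : Fin d → Finset (Fin (n''+2)) := fun l =>
    Finset.univ.filter (fun k : Fin (n''+2) => k.1 / q = (jl l).1) with hcset_def
  have hccard : ∀ l, (cset l).card = q := fun l => card_block_s18 hq hsub (jl l).2
  have hcoord : ∀ (k : Fin (n''+2)) (x : EuclideanSpace ℝ (Fin d)) (l : Fin d),
      blockMat q P (n''+2) k x l
        = (if k ∈ cset l then (((n''+2:ℕ):ℝ))/q else 0) * x l := by
    intro k x l
    rw [blockMat_apply hq P hPdisj k x l (hjl l)]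
    congr 1
    simp [hcset_def]
  constructor
  · -- unbiasedness
    intro i x
    unfold finExp blockPermK
    rw [hcard]
    rw [sum_perm_apply_s18 i (fun k => blockMat q P (n''+2) k x)]
    have hsumk : ∑ k : Fin (n''+2), blockMat q P (n''+2) k x = ((n''+2:ℕ):ℝ) • x := by
      ext l
      rw [WithLp.ofLp_sum, Finset.sum_apply l Finset.univ (fun k => (blockMat q P (n''+2) k x).ofLp),
        Finset.sum_congr rfl (fun k _ => hcoord k x l), ← Finset.sum_mul,
        Finset.sum_ite_mem, Finset.univ_inter, Finset.sum_const, hccard l,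
        PiLp.smul_apply, smul_eq_mul, nsmul_eq_mul]
      field_simp
    rw [hsumk, ← Nat.cast_smul_eq_nsmul ℝ, smul_smul, smul_smul]
    have : ((n''+2).factorial : ℝ)⁻¹ * ((n''+1).factorial : ℝ) * ((n''+2:ℕ):ℝ) = 1 := by
      rw [f2, hcast]
      have : ((n''+1).factorial : ℝ) ≠ 0 := by positivity
      field_simp
    rw [this, one_smul]
  · -- AB inequality
    intro a
    apply le_of_eq
    have hnorm : ∀ v : EuclideanSpace ℝ (Fin d), ‖v‖^2 = ∑ l, (v l)^2 := by
      intro v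
      rw [EuclideanSpace.norm_eq, Real.sq_sqrt (by positivity)]
      simp [Real.norm_eq_abs, sq_abs]
    set X : Equiv.Perm (Fin (n''+2)) → EuclideanSpace ℝ (Fin d) := fun π =>
      ((n''+2:ℕ):ℝ)⁻¹ • ∑ i, blockPermK q P π i (a i)
        - ((n''+2:ℕ):ℝ)⁻¹ • ∑ i, a i with hX
    -- coordinate formula for X
    have hXcoord : ∀ (π : Equiv.Perm (Fin (n''+2))) (l : Fin d),
        X π l = (q:ℝ)⁻¹ * (∑ i, (if π i ∈ cset l then (1:ℝ) else 0) * (a i l))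
          - ((n''+2:ℝ))⁻¹ * ∑ i, a i l := by
      intro π l
      rw [hX]
      show (((n''+2:ℕ):ℝ)⁻¹ • ∑ i, blockPermK q P π i (a i)) l
          - (((n''+2:ℕ):ℝ)⁻¹ • ∑ i, a i) l = _
      rw [PiLp.smul_apply, PiLp.smul_apply,
        WithLp.ofLp_sum, Finset.sum_apply l Finset.univ (fun i => (blockPermK q P π i (a i)).ofLp),
        WithLp.ofLp_sum, Finset.sum_apply l Finset.univ (fun i => (a i).ofLp), smul_eq_mul, smul_eq_mul]
      have : ∀ i : Fin (n''+2), blockPermK q P π i (a i) l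
          = (if π i ∈ cset l then (((n''+2:ℕ):ℝ))/q else 0) * a i l := fun i =>
        hcoord (π i) (a i) l
      rw [Finset.sum_congr rfl fun i _ => this i]
      congr 1
      · rw [Finset.mul_sum, Finset.mul_sum]
        refine Finset.sum_congr rfl fun i _ => ?_
        split
        · field_simp
        · simp
      · rw [hcast]
    -- expectation per coordinate
    have hEcoord : ∀ l : Fin d,
        ∑ π : Equiv.Perm (Fin (n''+2)), (X π l)^2
        = ((n''+2).factorial : ℝ) * ((((n''+2:ℝ)) - q) / ((((n''+2:ℝ)) - 1) * q)) *
            ((((n''+2:ℝ)))⁻¹ * (∑ i, (a i l) * (a i l))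
              - ((((n''+2:ℝ)))⁻¹ * ∑ i, a i l)^2) := by
      intro l
      rw [Finset.sum_congr rfl fun π _ => by rw [hXcoord π l]]
      exact scalar_core hq (cset l) (hccard l) (fun i => a i l)
    -- assemble
    have e1 : finExp (fun π : Equiv.Perm (Fin (n''+2)) => ‖X π‖^2)
        = ((n''+2).factorial : ℝ)⁻¹ * ∑ l, ∑ π : Equiv.Perm (Fin (n''+2)), (X π l)^2 := by
      unfold finExp
      rw [hcard, smul_eq_mul]
      congr 1
      rw [Finset.sum_congr rfl fun π _ => hnorm (X π), Finset.sum_comm]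
    rw [e1, Finset.sum_congr rfl fun l _ => hEcoord l]
    -- pull out constants
    set A' : ℝ := (((n''+2:ℝ)) - q) / ((((n''+2:ℝ)) - 1) * q) with hA'
    have e2 : ∑ l, ((n''+2).factorial : ℝ) * A' *
          ((((n''+2:ℝ)))⁻¹ * (∑ i, (a i l) * (a i l))
            - ((((n''+2:ℝ)))⁻¹ * ∑ i, a i l)^2)
        = ((n''+2).factorial : ℝ) * A' *
          ((((n''+2:ℝ)))⁻¹ * (∑ i, ‖a i‖^2) - ‖((n''+2:ℕ):ℝ)⁻¹ • ∑ i, a i‖^2) := by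
      rw [← Finset.mul_sum]
      congr 1
      rw [Finset.sum_sub_distrib, ← Finset.mul_sum, Finset.sum_comm]
      congr 1
      · congr 1
        refine Finset.sum_congr rfl fun i _ => ?_
        rw [hnorm (a i)]
        exact Finset.sum_congr rfl fun l _ => (pow_two (a i l)).symm
      · rw [hnorm]
        refine Finset.sum_congr rfl fun l _ => ?_
        congr 1
        rw [PiLp.smul_apply, WithLp.ofLp_sum, Finset.sum_apply l Finset.univ (fun i => (a i).ofLp), smul_eq_mul, hcast]
    rw [e2]
    rw [hcast]
    have hn1 : ((n'':ℝ) + 2) - 1 ≠ 0 := by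
      have : ((n'':ℝ) + 2) - 1 = (n'':ℝ) + 1 := by ring
      rw [this]; positivity
    have hn0 : ((n'':ℝ) + 2) ≠ 0 := by positivity
    have hAeq : 1 - ((n'':ℝ)+2) * ((q:ℝ) - 1) / ((((n'':ℝ)+2) - 1) * q) = A' := by
      rw [hA']
      field_simp
      ring
    rw [hAeq]
    rw [f2]
    field_simp
end

section
/- Let n > 1 and let Q_1,…,Q_n : ℝ^d → ℝ^d be deterministic maps satisfying: (1) there exists ω ≥ 0 with (1/n)Σ_{j=1}^n ‖Q_j(x)‖² ≤ (ω+1)‖x‖² for all x ∈ ℝ^d; (2) there exists θ ∈ ℝ with Σ_{j=1}^n ⟨Q_j(x), Q_j(y)⟩ = θ·⟨x, y⟩ for all x, y ∈ ℝ^d; (3) (1/n)Σ_{j=1}^n Q_j(x) = x for all x ∈ ℝ^d. Let π = (π_1,…,π_n) be a uniformly random permutation of {1,…,n} and define C_i := Q_{π_i}. Then {C_i}_{i=1}^n satisfies the AB inequality with A = (ω+1)/n − (1/(n−1))·(1 − θ/n²) and B = 1 − (n/(n−1))·(1 − θ/n²); that is, each C_i is unbiased and for all a_1,…,a_n ∈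 ℝ^d, E[‖(1/n)Σ_{i=1}^n C_i(a_i) − (1/n)Σ_{i=1}^n a_i‖²] ≤ A·(1/n)Σ_{i=1}^n ‖a_i‖² − B·‖(1/n)Σ_{i=1}^n a_i‖². -/
open Finset
open scoped RealInnerProductSpace

lemma exists_perm_two {α : Type*} [DecidableEq α] {j l j' l' : α} (hjl : j ≠ l) (h' : j' ≠ l') :
    ∃ σ : Equiv.Perm α, σ j = j' ∧ σ l = l' := by
  set m := Equiv.swap j j' l with hm
  have hmj' : m ≠ j' := by
    have : Equiv.swap j j' l ≠ Equiv.swap j j' j := (Equiv.swap j j').injective.ne hjl.symm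
    simpa [hm] using this
  refine ⟨(Equiv.swap m l') * (Equiv.swap j j'), ?_, ?_⟩
  · simp [Equiv.Perm.mul_apply, ← hm, Equiv.swap_apply_of_ne_of_ne hmj'.symm h']
  · simp [Equiv.Perm.mul_apply, ← hm]

lemma card_fiber_pair_const {n : ℕ} {i k : Fin n} (hik : i ≠ k) {j l j' l' : Fin n}
    (hjl : j ≠ l) (h' : j' ≠ l') :
    #(filter (fun π : Equiv.Perm (Fin n) => π i = j ∧ π k = l) univ) =
      #(filter (fun π : Equiv.Perm (Fin n) => π i = j' ∧ π k = l') univ) := by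
  obtain ⟨σ, hσ1, hσ2⟩ := exists_perm_two hjl h'
  apply Finset.card_bij (fun π _ => σ * π)
  · intro π hπ
    simp only [mem_filter, mem_univ, true_and] at hπ ⊢
    simp [Equiv.Perm.mul_apply, hπ.1, hπ.2, hσ1, hσ2]
  · intro π1 h1 π2 h2 h
    exact mul_left_cancel h
  · intro π hπ
    simp only [mem_filter, mem_univ, true_and] at hπ
    refine ⟨σ⁻¹ * π, ?_, by group⟩
    simp only [mem_filter, mem_univ, true_and, Equiv.Perm.mul_apply, hπ.1, hπ.2,
      ← hσ1, ← hσ2, Equiv.Perm.inv_def, Equiv.symm_apply_apply, and_self]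

lemma sum_perm_pair_s19 {n : ℕ} (hn : 1 < n) {V : Type*} [AddCommGroup V] [Module ℝ V]
    {i k : Fin n} (hik : i ≠ k) (g : Fin n → Fin n → V) :
    ∑ π : Equiv.Perm (Fin n), g (π i) (π k) =
      ((n.factorial : ℝ) / (n * (n - 1))) • ∑ p ∈ (univ : Finset (Fin n)).offDiag, g p.1 p.2 := by
  have hmaps : ∀ π : Equiv.Perm (Fin n), π ∈ (univ : Finset (Equiv.Perm (Fin n))) →
      (π i, π k) ∈ (univ : Finset (Fin n)).offDiag := by
    intro π _
    simp [Finset.mem_offDiag, π.injective.ne hik]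
  have hnn : ((n : ℝ) * ((n : ℝ) - 1)) ≠ 0 := by
    have h0 : (n : ℝ) ≠ 0 := by positivity
    have h1 : (n : ℝ) - 1 ≠ 0 := by
      have : (1 : ℝ) < n := by exact_mod_cast hn
      linarith
    exact mul_ne_zero h0 h1
  have hcard : ∀ p ∈ (univ : Finset (Fin n)).offDiag,
      ((#(filter (fun π : Equiv.Perm (Fin n) => (π i, π k) = p) univ)) : ℝ) =
        (n.factorial : ℝ) / (n * (n - 1)) := by
    intro p hp
    rw [Finset.mem_offDiag] at hp
    have htot : (Fintype.card (Equiv.Perm (Fin n))) =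
        ∑ q ∈ (univ : Finset (Fin n)).offDiag,
          #(filter (fun π : Equiv.Perm (Fin n) => (π i, π k) = q) univ) := by
      rw [← Finset.card_univ]
      exact Finset.card_eq_sum_card_fiberwise hmaps
    have hconst : ∀ q ∈ (univ : Finset (Fin n)).offDiag,
        #(filter (fun π : Equiv.Perm (Fin n) => (π i, π k) = q) univ) =
        #(filter (fun π : Equiv.Perm (Fin n) => (π i, π k) = p) univ) := by
      intro q hq
      rw [Finset.mem_offDiag] at hq
      have := card_fiber_pair_const (n := n) (i := i) (k := k) hik hq.2.2 hp.2.2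
      simpa [Prod.ext_iff, and_assoc] using this
    rw [Finset.sum_congr rfl hconst, Finset.sum_const, Finset.offDiag_card,
      Finset.card_univ, Fintype.card_fin, Fintype.card_perm, Fintype.card_fin, smul_eq_mul] at htot
    have hcast : (((n * n - n) : ℕ) : ℝ) = (n : ℝ) * ((n : ℝ) - 1) := by
      rw [Nat.cast_sub (Nat.le_mul_of_pos_left n (by omega))]
      push_cast; ring
    have hre := congrArg (fun m : ℕ => (m : ℝ)) htot
    push_cast [hcast] at hre
    rw [eq_div_iff hnn]
    linarith [hre]
  rw [← Finset.sum_fiberwise_of_maps_to hmaps (fun π => g (π i) (π k)), Finset.smul_sum]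
  refine Finset.sum_congr rfl fun p hp => ?_
  have : ∀ π ∈ filter (fun π : Equiv.Perm (Fin n) => (π i, π k) = p) univ,
      g (π i) (π k) = g p.1 p.2 := by
    intro π hπ
    simp only [mem_filter, mem_univ, true_and, Prod.ext_iff] at hπ
    rw [hπ.1, hπ.2]
  rw [Finset.sum_congr rfl this, Finset.sum_const, ← Nat.cast_smul_eq_nsmul ℝ, hcard p hp]

lemma sum_perm_single {n : ℕ} (hn : 1 < n) {V : Type*} [AddCommGroup V] [Module ℝ V]
    (i : Fin n) (f : Fin n → V) :
    ∑ π : Equiv.Perm (Fin n), f (π i) = ((n.factorial : ℝ) / n) • ∑ j, f j := by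
  obtain ⟨k, hk⟩ : ∃ k : Fin n, k ≠ i := by
    have : 1 < Fintype.card (Fin n) := by simpa using hn
    obtain ⟨k, hk⟩ := Fintype.exists_ne_of_one_lt_card this i
    exact ⟨k, hk⟩
  have := sum_perm_pair_s19 hn (i := i) (k := k) (Ne.symm hk) (fun j _ => f j)
  rw [this]
  have hoff : ∑ p ∈ (univ : Finset (Fin n)).offDiag, f p.1 =
      (n : ℝ) • (∑ j, f j) - ∑ j, f j := by
    have hsplit : ∑ p ∈ (univ : Finset (Fin n)).diag, f p.1 +
        ∑ p ∈ (univ : Finset (Fin n)).offDiag, f p.1 =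
        ∑ p ∈ (univ : Finset (Fin n)) ×ˢ (univ : Finset (Fin n)), f p.1 := by
      rw [← Finset.sum_union (Finset.disjoint_diag_offDiag _), Finset.diag_union_offDiag]
    have hdiag : ∑ p ∈ (univ : Finset (Fin n)).diag, f p.1 = ∑ j, f j := by
      rw [Finset.sum_diag]
    have hprod : ∑ p ∈ (univ : Finset (Fin n)) ×ˢ (univ : Finset (Fin n)), f p.1 =
        (n : ℝ) • (∑ j, f j) := by
      rw [Finset.sum_product]
      simp only [Finset.sum_const, Finset.card_univ, Fintype.card_fin,
        ← Nat.cast_smul_eq_nsmul ℝ, ← Finset.smul_sum]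
    rw [hdiag, hprod] at hsplit
    linear_combination (norm := module) hsplit
  rw [hoff, smul_sub, ← smul_assoc, smul_eq_mul]
  have h0 : (n : ℝ) ≠ 0 := by positivity
  have h1 : (n : ℝ) - 1 ≠ 0 := by
    have : (1 : ℝ) < n := by exact_mod_cast hn
    linarith
  rw [← sub_smul]
  congr 1
  field_simp

/-- permutation of mappings. Let `Q₁,…,Qₙ` be deterministic maps with
(1) `(1/n)∑ⱼ‖Qⱼ(x)‖² ≤ (ω+1)‖x‖²`, (2) `∑ⱼ⟪Qⱼ(x),Qⱼ(y)⟫ = θ⟪x,y⟫`, (3) `(1/n)∑ⱼQⱼ(x) = x`,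
and let `Cᵢ := Q_{π i}` for a uniformly random permutation `π`. Then `{Cᵢ}ᵢ` satisfies the
AB inequality with `A = (ω+1)/n − (1/(n−1))(1 − θ/n²)` and `B = 1 − (n/(n−1))(1 − θ/n²)`. -/
theorem permutation_of_mappings_AB
    {d n : ℕ} (hn : 1 < n)
    (Q : Fin n → EuclideanSpace ℝ (Fin d) → EuclideanSpace ℝ (Fin d))
    (omg : ℝ) (homg : 0 ≤ omg)
    (h1 : ∀ x : EuclideanSpace ℝ (Fin d),
      (n : ℝ)⁻¹ * ∑ j, ‖Q j x‖ ^ 2 ≤ (omg + 1) * ‖x‖ ^ 2)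
    (θ : ℝ)
    (h2 : ∀ x y : EuclideanSpace ℝ (Fin d), ∑ j, ⟪Q j x, Q j y⟫ = θ * ⟪x, y⟫)
    (h3 : ∀ x : EuclideanSpace ℝ (Fin d), (n : ℝ)⁻¹ • ∑ j, Q j x = x) :
    (∀ (i : Fin n) (x : EuclideanSpace ℝ (Fin d)),
      finExp (fun π : Equiv.Perm (Fin n) => Q (π i) x) = x) ∧
    (∀ a : Fin n → EuclideanSpace ℝ (Fin d),
      finExp (fun π : Equiv.Perm (Fin n) =>
          ‖(n : ℝ)⁻¹ • ∑ i, Q (π i) (a i) - (n : ℝ)⁻¹ • ∑ i, a i‖ ^ 2) ≤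
        ((omg + 1) / n - (1 / ((n : ℝ) - 1)) * (1 - θ / (n : ℝ) ^ 2)) *
            ((n : ℝ)⁻¹ * ∑ i, ‖a i‖ ^ 2)
          - (1 - ((n : ℝ) / ((n : ℝ) - 1)) * (1 - θ / (n : ℝ) ^ 2)) *
            ‖(n : ℝ)⁻¹ • ∑ i, a i‖ ^ 2) := by
  classical
  have h0 : (n : ℝ) ≠ 0 := by positivity
  have h1' : (n : ℝ) - 1 ≠ 0 := by
    have : (1 : ℝ) < n := by exact_mod_cast hn
    linarith
  have hN : (n.factorial : ℝ) ≠ 0 := by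
    exact_mod_cast (Nat.factorial_pos n).ne'
  have hQsum : ∀ x : EuclideanSpace ℝ (Fin d), ∑ j, Q j x = (n : ℝ) • x := by
    intro x
    calc ∑ j, Q j x = (n : ℝ) • ((n : ℝ)⁻¹ • ∑ j, Q j x) := (smul_inv_smul₀ h0 _).symm
    _ = (n : ℝ) • x := by rw [h3 x]
  have key1 : ∀ (i : Fin n) (x : EuclideanSpace ℝ (Fin d)),
      ∑ π : Equiv.Perm (Fin n), Q (π i) x = (n.factorial : ℝ) • x := by
    intro i x
    rw [sum_perm_single hn i (fun j => Q j x), hQsum, smul_smul]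
    congr 1
    field_simp
  have hcardP : (Fintype.card (Equiv.Perm (Fin n)) : ℝ) = (n.factorial : ℝ) := by
    simp [Fintype.card_perm]
  constructor
  · intro i x
    show (Fintype.card (Equiv.Perm (Fin n)) : ℝ)⁻¹ • ∑ π : Equiv.Perm (Fin n), Q (π i) x = x
    rw [key1 i x, hcardP, inv_smul_smul₀ hN]
  · intro a
    set v : EuclideanSpace ℝ (Fin d) := (n : ℝ)⁻¹ • ∑ i, a i with hv
    set S : ℝ := ∑ i, ‖a i‖ ^ 2 with hS
    set W : ℝ := ‖v‖ ^ 2 with hW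
    have hav : ∑ i, a i = (n : ℝ) • v := (smul_inv_smul₀ h0 _).symm
    -- sum over π of u π
    have husum : ∑ π : Equiv.Perm (Fin n), ((n : ℝ)⁻¹ • ∑ i, Q (π i) (a i))
        = (n.factorial : ℝ) • v := by
      rw [← Finset.smul_sum, Finset.sum_comm,
        Finset.sum_congr rfl (fun i _ => key1 i (a i)), ← Finset.smul_sum, hav,
        smul_comm, inv_smul_smul₀ h0]
    -- cross term
    have key2 : ∑ π : Equiv.Perm (Fin n), ⟪(n : ℝ)⁻¹ • ∑ i, Q (π i) (a i), v⟫
        = (n.factorial : ℝ) * W := by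
      rw [← sum_inner, husum, real_inner_smul_left, real_inner_self_eq_norm_sq, hW]
    -- diagonal sums
    have hD : ∀ i : Fin n, ∑ π : Equiv.Perm (Fin n), ⟪Q (π i) (a i), Q (π i) (a i)⟫
        = ((n.factorial : ℝ) / n) * ∑ j, ‖Q j (a i)‖ ^ 2 := by
      intro i
      rw [sum_perm_single hn i (fun j => ⟪Q j (a i), Q j (a i)⟫), smul_eq_mul]
      congr 1
      exact Finset.sum_congr rfl fun j _ => real_inner_self_eq_norm_sq _
    -- full-product inner sums
    have hinprod : ∀ x y : EuclideanSpace ℝ (Fin d),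
        ∑ q ∈ (univ : Finset (Fin n)).offDiag, ⟪Q q.1 x, Q q.2 y⟫
          = ((n : ℝ) ^ 2 - θ) * ⟪x, y⟫ := by
      intro x y
      have hsplit : ∑ q ∈ (univ : Finset (Fin n)).diag, ⟪Q q.1 x, Q q.2 y⟫
          + ∑ q ∈ (univ : Finset (Fin n)).offDiag, ⟪Q q.1 x, Q q.2 y⟫
          = ∑ q ∈ (univ : Finset (Fin n)) ×ˢ (univ : Finset (Fin n)), ⟪Q q.1 x, Q q.2 y⟫ := by
        rw [← Finset.sum_union (Finset.disjoint_diag_offDiag _), Finset.diag_union_offDiag]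
      have hdiag : ∑ q ∈ (univ : Finset (Fin n)).diag, ⟪Q q.1 x, Q q.2 y⟫ = θ * ⟪x, y⟫ := by
        rw [Finset.sum_diag]; exact h2 x y
      have hprod : ∑ q ∈ (univ : Finset (Fin n)) ×ˢ (univ : Finset (Fin n)), ⟪Q q.1 x, Q q.2 y⟫
          = (n : ℝ) ^ 2 * ⟪x, y⟫ := by
        rw [Finset.sum_product]
        have : ∀ j : Fin n, ∑ l, ⟪Q j x, Q l y⟫ = (n : ℝ) * ⟪Q j x, y⟫ := by
          intro j
          rw [← inner_sum, hQsum y, real_inner_smul_right]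
        rw [Finset.sum_congr rfl (fun j _ => this j), ← Finset.mul_sum, ← sum_inner, hQsum x,
          real_inner_smul_left]
        ring
      rw [hdiag, hprod] at hsplit
      linarith
    -- off-diagonal term over π
    have hO : ∀ p ∈ (univ : Finset (Fin n)).offDiag,
        ∑ π : Equiv.Perm (Fin n), ⟪Q (π p.1) (a p.1), Q (π p.2) (a p.2)⟫
          = ((n.factorial : ℝ) / (n * ((n : ℝ) - 1))) * (((n : ℝ) ^ 2 - θ) * ⟪a p.1, a p.2⟫) := by
      intro p hp
      rw [Finset.mem_offDiag] at hp
      rw [sum_perm_pair_s19 hn hp.2.2 (fun j l => ⟪Q j (a p.1), Q l (a p.2)⟫), smul_eq_mul,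
        hinprod]
    -- sum over offDiag of inner products of a
    have hTo : ∑ p ∈ (univ : Finset (Fin n)).offDiag, ⟪a p.1, a p.2⟫
        = (n : ℝ) ^ 2 * W - S := by
      have hsplit : ∑ p ∈ (univ : Finset (Fin n)).diag, ⟪a p.1, a p.2⟫
          + ∑ p ∈ (univ : Finset (Fin n)).offDiag, ⟪a p.1, a p.2⟫
          = ∑ p ∈ (univ : Finset (Fin n)) ×ˢ (univ : Finset (Fin n)), ⟪a p.1, a p.2⟫ := by
        rw [← Finset.sum_union (Finset.disjoint_diag_offDiag _), Finset.diag_union_offDiag]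
      have hdiag : ∑ p ∈ (univ : Finset (Fin n)).diag, ⟪a p.1, a p.2⟫ = S := by
        rw [Finset.sum_diag, hS]
        exact Finset.sum_congr rfl fun i _ => real_inner_self_eq_norm_sq _
      have hprod : ∑ p ∈ (univ : Finset (Fin n)) ×ˢ (univ : Finset (Fin n)), ⟪a p.1, a p.2⟫
          = (n : ℝ) ^ 2 * W := by
        rw [Finset.sum_product]
        simp only [← inner_sum]
        rw [← sum_inner, hav, real_inner_smul_left, real_inner_smul_right,
          real_inner_self_eq_norm_sq, ← hW]
        ring
      rw [hdiag, hprod] at hsplit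
      linarith
    -- expand ‖u π‖²
    have hu2 : ∑ π : Equiv.Perm (Fin n), ‖(n : ℝ)⁻¹ • ∑ i, Q (π i) (a i)‖ ^ 2
        = (n : ℝ)⁻¹ * ((n : ℝ)⁻¹ *
            ((∑ i, ∑ π : Equiv.Perm (Fin n), ⟪Q (π i) (a i), Q (π i) (a i)⟫)
              + ∑ p ∈ (univ : Finset (Fin n)).offDiag,
                  ∑ π : Equiv.Perm (Fin n), ⟪Q (π p.1) (a p.1), Q (π p.2) (a p.2)⟫)) := by
      have hpt : ∀ π : Equiv.Perm (Fin n), ‖(n : ℝ)⁻¹ • ∑ i, Q (π i) (a i)‖ ^ 2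
          = (n : ℝ)⁻¹ * ((n : ℝ)⁻¹ * ∑ p ∈ (univ : Finset (Fin n)) ×ˢ (univ : Finset (Fin n)),
              ⟪Q (π p.1) (a p.1), Q (π p.2) (a p.2)⟫) := by
        intro π
        rw [← real_inner_self_eq_norm_sq, real_inner_smul_left, real_inner_smul_right,
          sum_inner, Finset.sum_product]
        simp only [inner_sum]
      rw [Finset.sum_congr rfl (fun π _ => hpt π), ← Finset.mul_sum]
      congr 1
      rw [← Finset.mul_sum]
      congr 1
      rw [Finset.sum_comm]
      have : ∑ p ∈ (univ : Finset (Fin n)) ×ˢ (univ : Finset (Fin n)),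
            ∑ π : Equiv.Perm (Fin n), ⟪Q (π p.1) (a p.1), Q (π p.2) (a p.2)⟫
          = ∑ p ∈ (univ : Finset (Fin n)).diag,
            ∑ π : Equiv.Perm (Fin n), ⟪Q (π p.1) (a p.1), Q (π p.2) (a p.2)⟫
          + ∑ p ∈ (univ : Finset (Fin n)).offDiag,
            ∑ π : Equiv.Perm (Fin n), ⟪Q (π p.1) (a p.1), Q (π p.2) (a p.2)⟫ := by
        rw [← Finset.sum_union (Finset.disjoint_diag_offDiag _), Finset.diag_union_offDiag]
      rw [this, Finset.sum_diag]
    -- expectation rewritten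
    have hE : finExp (fun π : Equiv.Perm (Fin n) =>
          ‖(n : ℝ)⁻¹ • ∑ i, Q (π i) (a i) - (n : ℝ)⁻¹ • ∑ i, a i‖ ^ 2)
        = (n.factorial : ℝ)⁻¹ *
          ∑ π : Equiv.Perm (Fin n), ‖(n : ℝ)⁻¹ • ∑ i, Q (π i) (a i) - v‖ ^ 2 := by
      simp only [finExp, smul_eq_mul, Fintype.card_perm, Fintype.card_fin, ← hv]
    have hsum_expand : ∑ π : Equiv.Perm (Fin n), ‖(n : ℝ)⁻¹ • ∑ i, Q (π i) (a i) - v‖ ^ 2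
        = (∑ π : Equiv.Perm (Fin n), ‖(n : ℝ)⁻¹ • ∑ i, Q (π i) (a i)‖ ^ 2)
          - 2 * ((n.factorial : ℝ) * W) + (n.factorial : ℝ) * W := by
      rw [Finset.sum_congr rfl (fun π _ => norm_sub_sq_real _ v), Finset.sum_add_distrib,
        Finset.sum_sub_distrib]
      congr 1
      · congr 1
        rw [← Finset.mul_sum, key2]
      · rw [Finset.sum_const, Finset.card_univ, nsmul_eq_mul, Fintype.card_perm,
          Fintype.card_fin, hW]
    -- diagonal bound
    have hDbound : ∑ i, ∑ π : Equiv.Perm (Fin n), ⟪Q (π i) (a i), Q (π i) (a i)⟫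
        ≤ (n.factorial : ℝ) * (omg + 1) * S := by
      rw [Finset.sum_congr rfl (fun i _ => hD i), hS, Finset.mul_sum]
      refine Finset.sum_le_sum fun i _ => ?_
      have hb : ∑ j, ‖Q j (a i)‖ ^ 2 ≤ (n : ℝ) * ((omg + 1) * ‖a i‖ ^ 2) := by
        have := h1 (a i)
        have hnpos : (0 : ℝ) < n := by positivity
        rw [inv_mul_le_iff₀ hnpos] at this
        linarith
      calc (n.factorial : ℝ) / n * ∑ j, ‖Q j (a i)‖ ^ 2
          ≤ (n.factorial : ℝ) / n * ((n : ℝ) * ((omg + 1) * ‖a i‖ ^ 2)) := by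
            apply mul_le_mul_of_nonneg_left hb
            positivity
        _ = (n.factorial : ℝ) * (omg + 1) * ‖a i‖ ^ 2 := by field_simp
    -- off-diagonal value
    have hOval : ∑ p ∈ (univ : Finset (Fin n)).offDiag,
          ∑ π : Equiv.Perm (Fin n), ⟪Q (π p.1) (a p.1), Q (π p.2) (a p.2)⟫
        = ((n.factorial : ℝ) / (n * ((n : ℝ) - 1))) * (((n : ℝ) ^ 2 - θ) * ((n : ℝ) ^ 2 * W - S)) := by
      rw [Finset.sum_congr rfl hO, ← Finset.mul_sum]
      congr 1
      rw [← Finset.mul_sum, hTo]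
    -- final assembly
    rw [hE, hsum_expand, hu2]
    set OD : ℝ := ((n.factorial : ℝ) / (n * ((n : ℝ) - 1))) *
      (((n : ℝ) ^ 2 - θ) * ((n : ℝ) ^ 2 * W - S)) with hOD
    rw [hOval]
    have hfinal : (n.factorial : ℝ)⁻¹ *
          ((n : ℝ)⁻¹ * ((n : ℝ)⁻¹ * ((n.factorial : ℝ) * (omg + 1) * S + OD))
            - 2 * ((n.factorial : ℝ) * W) + (n.factorial : ℝ) * W)
        = ((omg + 1) / n - (1 / ((n : ℝ) - 1)) * (1 - θ / (n : ℝ) ^ 2)) * ((n : ℝ)⁻¹ * S)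
          - (1 - ((n : ℝ) / ((n : ℝ) - 1)) * (1 - θ / (n : ℝ) ^ 2)) * W := by
      rw [hOD]
      field_simp
      ring
    refine le_trans ?_ hfinal.le
    gcongr
end
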